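/- arXiv:math/0003032 — 8 statements merged into one kernel-verified Lean document; each statement's English description precedes it below -/
import Mathlib

section
/- Let A be an n×n integer matrix with irreducible characteristic polynomial and eigenvalue λ, K = ℚ(λ). The image under γ(p(A)) = p(λ) of the centralizer Z(A) of A in GL(n,ℤ) equals the intersection of the unit group of O_K with the image γ(C(A)) of the centralizer of A in M(n,ℤ). -/
open Matrix Polynomial

lemma my_eval_charpoly {n : ℕ} {R : Type*} [CommRing R] (M : Matrix (Fin n) (Fin n) R) (t : R) :
    M.charpoly.eval t = (Matrix.diagonal (fun _ => t) - M).det := by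
  rw [Matrix.charpoly, Polynomial.eval, ← Polynomial.coe_eval₂RingHom, RingHom.map_det]
  congr 1
  ext i j
  by_cases h : i = j <;>
    simp [Matrix.charmatrix_apply, Matrix.diagonal, h]

lemma my_mulVec_pow {n : ℕ} (M : Matrix (Fin n) (Fin n) ℂ) (v : Fin n → ℂ) (l : ℂ)
    (hv : M.mulVec v = l • v) (k : ℕ) : (M ^ k).mulVec v = l ^ k • v := by
  induction k with
  | zero => simp
  | succ k ih =>
    rw [pow_succ', pow_succ', ← Matrix.mulVec_mulVec, ih, Matrix.mulVec_smul, hv, smul_smul,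
        mul_comm]

lemma my_mulVec_aeval {n : ℕ} (M : Matrix (Fin n) (Fin n) ℂ) (v : Fin n → ℂ) (l : ℂ)
    (hv : M.mulVec v = l • v) (q : ℂ[X]) :
    (Polynomial.aeval M q).mulVec v = q.eval l • v := by
  induction q using Polynomial.induction_on' with
  | add p q hp hq => rw [map_add, Matrix.add_mulVec, hp, hq, eval_add, add_smul]
  | monomial k c =>
    rw [aeval_monomial, eval_monomial, ← Matrix.mulVec_mulVec, my_mulVec_pow M v l hv k,
      Matrix.mulVec_smul, Algebra.algebraMap_eq_smul_one, Matrix.smul_mulVec,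
      Matrix.one_mulVec, smul_smul, mul_comm]

lemma my_integral_of_eigen {n : ℕ} (B : Matrix (Fin n) (Fin n) ℤ) (v : Fin n → ℂ) (hv : v ≠ 0)
    (w : ℂ) (heig : (B.map (Int.cast : ℤ → ℂ)).mulVec v = w • v) : IsIntegral ℤ w := by
  have hker : (Matrix.diagonal (fun _ => w) - B.map (Int.cast : ℤ → ℂ)).mulVec v = 0 := by
    rw [Matrix.sub_mulVec, heig]
    have : (Matrix.diagonal (fun _ : Fin n => w)).mulVec v = w • v := by
      ext i; simp [Matrix.mulVec_diagonal]
    rw [this, sub_self]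
  have hdet : (Matrix.diagonal (fun _ => w) - B.map (Int.cast : ℤ → ℂ)).det = 0 :=
    (Matrix.exists_mulVec_eq_zero_iff).mp ⟨v, hv, hker⟩
  refine ⟨B.charpoly, B.charpoly_monic, ?_⟩
  rw [← Polynomial.eval_map, ← Matrix.charpoly_map, my_eval_charpoly]
  exact hdet
lemma my_det_aeval {n : ℕ} (hn : 0 < n) (M : Matrix (Fin n) (Fin n) ℂ) (q : ℂ[X]) :
    (Polynomial.aeval M q).det = ((M.charpoly.roots).map (fun μ => q.eval μ)).prod := by
  have hcard : M.charpoly.roots.card = n := by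
    rw [Polynomial.splits_iff_card_roots.mp (IsAlgClosed.splits M.charpoly)]
    simp
  have hchar : M.charpoly = (M.charpoly.roots.map (fun μ => X - C μ)).prod :=
    (Polynomial.prod_multiset_X_sub_C_of_monic_of_roots_card_eq M.charpoly_monic
      (Polynomial.splits_iff_card_roots.mp (IsAlgClosed.splits M.charpoly))).symm
  rcases eq_or_ne q 0 with rfl | hq
  · rw [map_zero, @Matrix.det_zero _ _ _ _ _ (Fin.pos_iff_nonempty.mp hn)]
    have hne : M.charpoly.roots ≠ 0 := by
      intro h; rw [h] at hcard; simp at hcard; omega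
    rcases Multiset.exists_mem_of_ne_zero hne with ⟨μ, hμ⟩
    exact (Multiset.prod_eq_zero (Multiset.mem_map.mpr ⟨μ, hμ, by simp⟩)).symm
  have hqfac : q = C q.leadingCoeff * (q.roots.map (fun a => X - C a)).prod :=
    (Polynomial.C_leadingCoeff_mul_prod_multiset_X_sub_C
      (Polynomial.splits_iff_card_roots.mp (IsAlgClosed.splits q))).symm
  set c := q.leadingCoeff with hc
  set s := q.roots with hs
  set R := M.charpoly.roots with hR
  set k := Multiset.card s with hk
  have key : ∀ a : ℂ, (Polynomial.aeval M (X - C a)).det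
      = (-1 : ℂ) ^ n * (R.map (fun μ => a - μ)).prod := by
    intro a
    have h1 : (Polynomial.aeval M (X - C a)) = M - Matrix.diagonal (fun _ => a) := by
      simp [Algebra.algebraMap_eq_smul_one, Matrix.smul_one_eq_diagonal]
    rw [h1, ← neg_sub, Matrix.det_neg, Fintype.card_fin, ← my_eval_charpoly]
    congr 1
    conv_lhs => rw [hchar]
    rw [eval_multiset_prod, Multiset.map_map]
    congr 1
    ext μ
    simp
  have hprod : ∀ t : Multiset ℂ,
      ((Polynomial.aeval M) ((t.map (fun a => X - C a)).prod)).det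
        = (t.map (fun a => ((Polynomial.aeval M) (X - C a)).det)).prod := by
    intro t
    induction t using Multiset.induction_on with
    | empty => simp
    | cons a t ih =>
      rw [Multiset.map_cons, Multiset.prod_cons, _root_.map_mul, Matrix.det_mul,
        Multiset.map_cons, Multiset.prod_cons, ih]
  have hLHS : (Polynomial.aeval M q).det
      = c ^ n * ((-1 : ℂ) ^ (n * k) * (s.map (fun a => (R.map (fun μ => a - μ)).prod)).prod) := by
    conv_lhs => rw [hqfac]
    have haevalC : Polynomial.aeval M (C c) = c • (1 : Matrix (Fin n) (Fin n) ℂ) := by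
      simp [Algebra.algebraMap_eq_smul_one]
    rw [_root_.map_mul, haevalC, smul_mul_assoc, one_mul, Matrix.det_smul, Fintype.card_fin,
      hprod s]
    congr 1
    have : Multiset.map (fun a => ((Polynomial.aeval M) (X - C a)).det) s
        = Multiset.map (fun a => (-1 : ℂ) ^ n * (R.map (fun μ => a - μ)).prod) s :=
      Multiset.map_congr rfl (fun a _ => key a)
    rw [this, Multiset.prod_map_mul, Multiset.map_const', Multiset.prod_replicate, ← hk,
      ← pow_mul]
  have hRHS : (R.map (fun μ => q.eval μ)).prod
      = c ^ n * ((-1 : ℂ) ^ (k * n) * (R.map (fun μ => (s.map (fun a => a - μ)).prod)).prod) := by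
    have : Multiset.map (fun μ => q.eval μ) R
        = Multiset.map (fun μ => c * ((-1 : ℂ) ^ k * (s.map (fun a => a - μ)).prod)) R := by
      apply Multiset.map_congr rfl
      intro μ _
      conv_lhs => rw [hqfac]
      rw [eval_mul, eval_C, eval_multiset_prod, Multiset.map_map]
      congr 1
      have : Multiset.map ((fun p => Polynomial.eval μ p) ∘ fun a => X - C a) s
          = Multiset.map (fun a => -(a - μ)) s := by
        apply Multiset.map_congr rfl
        intro a _
        simp
      rw [this]
      have h2 : Multiset.map (fun a => -(a - μ)) s
          = Multiset.map (fun a => (-1 : ℂ) * (a - μ)) s :=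
        Multiset.map_congr rfl (fun a _ => by ring)
      rw [h2, Multiset.prod_map_mul, Multiset.map_const', Multiset.prod_replicate, ← hk]
    rw [this, Multiset.prod_map_mul, Multiset.map_const', Multiset.prod_replicate, hcard,
      Multiset.prod_map_mul, Multiset.map_const', Multiset.prod_replicate, hcard, ← pow_mul]
  rw [hLHS, hRHS, Multiset.prod_map_prod_map, mul_comm k n]

section Main

variable {n : ℕ}

-- integrality of values of `v` at conjugate roots
lemma my_conj_integral (P : ℚ[X]) (hmonic : P.Monic) (l : ℂ)
    (hmin : minpoly ℚ l = P) (v : ℚ[X]) (hint : IsIntegral ℤ (Polynomial.aeval l v))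
    (μ : ℂ) (hμ : (P.map (algebraMap ℚ ℂ)).IsRoot μ) :
    IsIntegral ℤ ((v.map (algebraMap ℚ ℂ)).eval μ) := by
  obtain ⟨m, hm, hm0⟩ := hint
  refine ⟨m, hm, ?_⟩
  have hw : Polynomial.aeval l ((m.map (algebraMap ℤ ℚ)).comp v) = 0 := by
    rw [Polynomial.aeval_comp, Polynomial.aeval_map_algebraMap]
    rw [Polynomial.aeval_def]
    exact hm0
  have hdvd : P ∣ (m.map (algebraMap ℤ ℚ)).comp v := by
    rw [← hmin]
    exact minpoly.dvd ℚ l hw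
  obtain ⟨t, ht⟩ := hdvd
  have hmapped : ((m.map (algebraMap ℤ ℚ)).comp v).map (algebraMap ℚ ℂ)
      = (P.map (algebraMap ℚ ℂ)) * (t.map (algebraMap ℚ ℂ)) := by
    rw [ht, Polynomial.map_mul]
  have heval : (((m.map (algebraMap ℤ ℚ)).comp v).map (algebraMap ℚ ℂ)).eval μ = 0 := by
    rw [hmapped, Polynomial.eval_mul, hμ, zero_mul]
  rw [Polynomial.map_comp, Polynomial.map_map, ← IsScalarTower.algebraMap_eq ℤ ℚ ℂ,
    Polynomial.eval_comp] at heval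
  rw [Polynomial.eval₂_eq_eval_map]
  exact heval

/-- With `γ(p(A)) = p(λ)`, the image of the centralizer `Z(A)` of `A` in
`GL(n,ℤ)` equals the intersection of the group of algebraic units with the image
`γ(C(A))` of the centralizer of `A` in `M(n,ℤ)`. -/
theorem stmt2 (n : ℕ) (hn : 0 < n) (A : Matrix (Fin n) (Fin n) ℤ)
    (hA : IsUnit A.det)
    (hirr : Irreducible (Matrix.charpoly (A.map (Int.cast : ℤ → ℚ))))
    (l : ℂ) (hl : (Matrix.charpoly (A.map (Int.cast : ℤ → ℂ))).IsRoot l) :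
    {z : ℂ | ∃ B : Matrix (Fin n) (Fin n) ℤ, IsUnit B.det ∧ A * B = B * A ∧
        ∃ p : ℚ[X], Polynomial.aeval (A.map (Int.cast : ℤ → ℚ)) p =
            B.map (Int.cast : ℤ → ℚ) ∧ z = Polynomial.aeval l p}
      = {z : ℂ | z ≠ 0 ∧ IsIntegral ℤ z ∧ IsIntegral ℤ z⁻¹} ∩
        {z : ℂ | ∃ B : Matrix (Fin n) (Fin n) ℤ, A * B = B * A ∧
          ∃ p : ℚ[X], Polynomial.aeval (A.map (Int.cast : ℤ → ℚ)) p =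
              B.map (Int.cast : ℤ → ℚ) ∧ z = Polynomial.aeval l p} := by
  set Aq : Matrix (Fin n) (Fin n) ℚ := A.map (Int.cast : ℤ → ℚ) with hAq
  set Ac : Matrix (Fin n) (Fin n) ℂ := A.map (Int.cast : ℤ → ℂ) with hAc
  set P : ℚ[X] := Aq.charpoly with hP
  -- the ℚ-algebra hom on matrices induced by ℚ → ℂ
  set ψ : Matrix (Fin n) (Fin n) ℚ →ₐ[ℚ] Matrix (Fin n) (Fin n) ℂ :=
    (Algebra.ofId ℚ ℂ).mapMatrix with hψ
  have hmapc : ∀ M : Matrix (Fin n) (Fin n) ℤ,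
      ψ (M.map (Int.cast : ℤ → ℚ)) = M.map (Int.cast : ℤ → ℂ) := by
    intro M
    show (M.map (Int.cast : ℤ → ℚ)).map (Algebra.ofId ℚ ℂ) = M.map (Int.cast : ℤ → ℂ)
    have hc : (Algebra.ofId ℚ ℂ) ∘ (Int.cast : ℤ → ℚ) = (Int.cast : ℤ → ℂ) := by
      funext x; simp [Algebra.ofId_apply]
    rw [Matrix.map_map, hc]
  have hAcq : Ac = Aq.map (algebraMap ℚ ℂ) := (hmapc A).symm
  have hPc : Ac.charpoly = P.map (algebraMap ℚ ℂ) := by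
    rw [hAcq, Matrix.charpoly_map]
  have haevalP : Polynomial.aeval l P = 0 := by
    rw [Polynomial.aeval_def, ← Polynomial.eval_map, ← hPc]
    exact hl
  have hmin : minpoly ℚ l = P :=
    (minpoly.eq_of_irreducible_of_monic hirr haevalP Aq.charpoly_monic).symm
  have haeval_eq : ∀ p : ℚ[X], Polynomial.aeval l p
      = (p.map (algebraMap ℚ ℂ)).eval l := fun p => by
    rw [Polynomial.aeval_def, Polynomial.eval_map]
  -- an eigenvector for Ac
  have hdet0 : (Matrix.diagonal (fun _ : Fin n => l) - Ac).det = 0 := by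
    rw [← my_eval_charpoly]; exact hl
  obtain ⟨v, hv0, hveq⟩ := (Matrix.exists_mulVec_eq_zero_iff).mpr hdet0
  have hAv : Ac.mulVec v = l • v := by
    have hd : (Matrix.diagonal fun _ : Fin n => l).mulVec v = l • v := by
      ext i; simp [Matrix.mulVec_diagonal]
    rw [Matrix.sub_mulVec, hd, sub_eq_zero] at hveq
    exact hveq.symm
  -- the mulVec action of a matrix given by a rational polynomial in A
  have hmapmul : ∀ M N : Matrix (Fin n) (Fin n) ℤ,
      (M * N).map (Int.cast : ℤ → ℂ) = M.map Int.cast * N.map Int.cast := by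
    intro M N
    have := Matrix.map_mul (L := M) (M := N) (f := Int.castRingHom ℂ)
    simpa using this
  have hdetmap : ∀ M : Matrix (Fin n) (Fin n) ℤ,
      (M.map (Int.cast : ℤ → ℚ)).det = (M.det : ℚ) := by
    intro M
    have := (RingHom.map_det (Int.castRingHom ℚ) M).symm
    simpa using this
  have hpoly_act : ∀ (B : Matrix (Fin n) (Fin n) ℤ) (p : ℚ[X]),
      Polynomial.aeval Aq p = B.map (Int.cast : ℤ → ℚ) →
      (B.map (Int.cast : ℤ → ℂ)).mulVec v = (Polynomial.aeval l p) • v := by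
    intro B p hp
    have h1 : Polynomial.aeval Ac p = B.map (Int.cast : ℤ → ℂ) := by
      rw [← hmapc B, ← hp, ← Polynomial.aeval_algHom_apply, hmapc A]
    have h2 : Polynomial.aeval Ac (p.map (algebraMap ℚ ℂ)) = Polynomial.aeval Ac p :=
      Polynomial.aeval_map_algebraMap ℂ Ac p
    rw [← h1, ← h2, my_mulVec_aeval Ac v l hAv, haeval_eq]
  ext z
  simp only [Set.mem_setOf_eq, Set.mem_inter_iff]
  constructor
  · rintro ⟨B, hBdet, hcomm, p, hp, hz⟩
    obtain ⟨u, hu⟩ := (Matrix.isUnit_iff_isUnit_det B).mpr hBdet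
    set B' : Matrix (Fin n) (Fin n) ℤ := ↑u⁻¹ with hB'
    have hB'B : B' * B = 1 := by rw [hB', ← hu]; exact u.inv_mul
    have hBv : (B.map (Int.cast : ℤ → ℂ)).mulVec v = z • v := by
      rw [hpoly_act B p hp, ← hz]
    have hB'Bc : (B'.map (Int.cast : ℤ → ℂ)) * (B.map (Int.cast : ℤ → ℂ)) = 1 := by
      rw [← hmapmul, hB'B, Matrix.map_one _ (by simp) (by simp)]
    have hvrec : (B'.map (Int.cast : ℤ → ℂ)).mulVec ((B.map (Int.cast : ℤ → ℂ)).mulVec v)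
        = v := by
      rw [Matrix.mulVec_mulVec, hB'Bc, Matrix.one_mulVec]
    have hz0 : z ≠ 0 := by
      intro h
      rw [hBv, h, zero_smul, Matrix.mulVec_zero] at hvrec
      exact hv0 hvrec.symm
    have hB'v : (B'.map (Int.cast : ℤ → ℂ)).mulVec v = z⁻¹ • v := by
      rw [hBv, Matrix.mulVec_smul] at hvrec
      conv_rhs => rw [← hvrec]
      rw [smul_smul, inv_mul_cancel₀ hz0, one_smul]
    refine ⟨⟨hz0, my_integral_of_eigen B v hv0 z hBv,
      my_integral_of_eigen B' v hv0 z⁻¹ hB'v⟩, B, hcomm, p, hp, hz⟩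
  · rintro ⟨⟨hz0, _, hzinv⟩, B, hcomm, p, hp, hz⟩
    refine ⟨B, ?_, hcomm, p, hp, hz⟩
    -- coprimality and Bezout
    have hndvd : ¬ P ∣ p := by
      intro ⟨t, ht⟩
      apply hz0
      rw [hz, ht, _root_.map_mul, haevalP, zero_mul]
    obtain ⟨a, w, haw⟩ := (hirr.coprime_iff_not_dvd).mpr hndvd
    have hCB : (Polynomial.aeval Aq w) * (B.map (Int.cast : ℤ → ℚ)) = 1 := by
      have := congrArg (Polynomial.aeval Aq) haw
      rwa [map_add, _root_.map_mul, _root_.map_mul, Matrix.aeval_self_charpoly, mul_zero,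
        zero_add, _root_.map_one, hp] at this
    have hwl : (Polynomial.aeval l w) * z = 1 := by
      have := congrArg (Polynomial.aeval l) haw
      rwa [map_add, _root_.map_mul, _root_.map_mul, haevalP, mul_zero, zero_add, _root_.map_one,
        ← hz] at this
    have hwinv : Polynomial.aeval l w = z⁻¹ :=
      eq_inv_of_mul_eq_one_left hwl
    -- the determinant of aeval Aq w, over ℂ
    have hdetC : (algebraMap ℚ ℂ) (Polynomial.aeval Aq w).det
        = ((Ac.charpoly.roots).map
            (fun μ => (w.map (algebraMap ℚ ℂ)).eval μ)).prod := by
      rw [RingHom.map_det (algebraMap ℚ ℂ) (Polynomial.aeval Aq w)]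
      have h1 : (algebraMap ℚ ℂ).mapMatrix (Polynomial.aeval Aq w) = ψ (Polynomial.aeval Aq w) :=
        rfl
      have h2 : ψ (Polynomial.aeval Aq w) = Polynomial.aeval Ac (w.map (algebraMap ℚ ℂ)) := by
        rw [← Polynomial.aeval_algHom_apply]
        rw [hmapc A, Polynomial.aeval_map_algebraMap]
      rw [h1, h2, my_det_aeval hn]
    -- each factor is integral over ℤ
    have hint : IsIntegral ℤ ((algebraMap ℚ ℂ) (Polynomial.aeval Aq w).det) := by
      rw [hdetC]
      have : ∀ x ∈ (Ac.charpoly.roots).map (fun μ => (w.map (algebraMap ℚ ℂ)).eval μ),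
          x ∈ integralClosure ℤ ℂ := by
        intro x hx
        obtain ⟨μ, hμ, rfl⟩ := Multiset.mem_map.mp hx
        have hμroot : (P.map (algebraMap ℚ ℂ)).IsRoot μ := by
          rw [← hPc]
          exact (Polynomial.isRoot_of_mem_roots hμ)
        exact my_conj_integral P Aq.charpoly_monic l hmin w (hwinv ▸ hzinv) μ hμroot
      exact Subalgebra.multiset_prod_mem _ this
    rw [isIntegral_algebraMap_iff (algebraMap ℚ ℂ).injective] at hint
    obtain ⟨k, hk⟩ := IsIntegrallyClosed.isIntegral_iff.mp hint
    -- conclude det B is a unit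
    have hdet1 : (Polynomial.aeval Aq w).det * ((B.det : ℚ)) = 1 := by
      have := congrArg Matrix.det hCB
      rwa [Matrix.det_mul, Matrix.det_one, hdetmap B] at this
    have hk' : (k : ℚ) = (Polynomial.aeval Aq w).det := by rw [← hk]; simp
    rw [← hk'] at hdet1
    have hfin : (k * B.det : ℤ) = 1 := by exact_mod_cast hdet1
    exact ⟨⟨B.det, k, by linarith [hfin], by linarith [hfin]⟩, rfl⟩

end Main
end

section
/- Let A be a hyperbolic matrix in SL(n,ℤ) with irreducible characteristic polynomial and distinct real eigenvalues. Then every element of the centralizer of A in GL(n,ℤ) other than ±Id is hyperbolic (i.e., has no eigenvalue of absolute value 1). -/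
open Matrix Polynomial

lemma charpoly_eval' {n : ℕ} {R : Type*} [CommRing R] (M : Matrix (Fin n) (Fin n) R) (r : R) :
    M.charpoly.eval r = (Matrix.scalar (Fin n) r - M).det := by
  rw [Matrix.charpoly, _root_.eval_det, matPolyEquiv_charmatrix]
  simp

lemma map_mul_int {n : ℕ} {R : Type*} [CommRing R] (M N : Matrix (Fin n) (Fin n) ℤ) :
    (M * N).map (Int.cast : ℤ → R) = M.map (Int.cast : ℤ → R) * N.map (Int.cast : ℤ → R) := by
  simpa using Matrix.map_mul (L := M) (M := N) (f := Int.castRingHom R)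

lemma aeval_map_matrix {n : ℕ} {R S : Type*} [CommRing R] [CommRing S] (f : R →+* S)
    (A : Matrix (Fin n) (Fin n) R) (q : R[X]) :
    (Polynomial.aeval A q).map f = Polynomial.aeval (A.map f) (q.map f) := by
  induction q using Polynomial.induction_on' with
  | add p r hp hr => simp [Polynomial.map_add, map_add, Matrix.map_add, hp, hr]
  | monomial k a =>
    simp only [Polynomial.aeval_monomial, Polynomial.map_monomial]
    rw [Matrix.map_mul]
    have hpow : (A ^ k).map f = (A.map f) ^ k := by
      simpa [RingHom.mapMatrix_apply] using _root_.map_pow (f.mapMatrix) A k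
    rw [hpow]
    congr 1
    ext i j
    simp [Matrix.algebraMap_matrix_apply, apply_ite f]

lemma sum_mulVec' {n : ℕ} {K : Type*} [CommRing K] {ι : Type*} (s : Finset ι)
    (M : ι → Matrix (Fin n) (Fin n) K) (v : Fin n → K) :
    (∑ i ∈ s, M i).mulVec v = ∑ i ∈ s, (M i).mulVec v := by
  induction s using Finset.cons_induction with
  | empty => simp
  | cons a s ha ih => simp [Finset.sum_cons, Matrix.add_mulVec, ih]

lemma cyclic_li {n : ℕ} {K : Type*} [Field K] (A : Matrix (Fin n) (Fin n) K)
    (hirr : Irreducible A.charpoly) (v : Fin n → K) (hv : v ≠ 0) :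
    LinearIndependent K (fun i : Fin n => (A ^ (i : ℕ)).mulVec v) := by
  have key : ∀ q : K[X], (Polynomial.aeval A q).mulVec v = 0 → q.natDegree < n → q = 0 := by
    intro q hq hdeg
    by_contra h0
    have hnd : ¬ A.charpoly ∣ q := by
      intro hdvd
      have := Polynomial.natDegree_le_of_dvd hdvd h0
      rw [A.charpoly_natDegree_eq_dim] at this
      simp at this
      omega
    obtain ⟨a, b, hab⟩ := (hirr.coprime_iff_not_dvd.mpr hnd)
    have h1 : Polynomial.aeval A (a * A.charpoly + b * q) = 1 := by rw [hab]; simp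
    have h2 : Polynomial.aeval A (a * A.charpoly + b * q)
        = Polynomial.aeval A b * Polynomial.aeval A q := by
      simp [map_add, _root_.map_mul, Matrix.aeval_self_charpoly]
    apply hv
    calc v = (Polynomial.aeval A b * Polynomial.aeval A q).mulVec v := by rw [← h2, h1]; simp
    _ = (Polynomial.aeval A b).mulVec ((Polynomial.aeval A q).mulVec v) := by
        rw [← Matrix.mulVec_mulVec]
    _ = 0 := by rw [hq, Matrix.mulVec_zero]
  rw [Fintype.linearIndependent_iff]
  intro c hc
  set q : K[X] := ∑ i : Fin n, Polynomial.C (c i) * X ^ (i : ℕ) with hqdef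
  have hq0 : q = 0 := by
    rcases Nat.eq_zero_or_pos n with h | h
    · subst h; simp [hqdef]
    apply key
    · have : Polynomial.aeval A q = ∑ i : Fin n, c i • A ^ (i : ℕ) := by
        simp [hqdef, map_sum, Algebra.smul_def]
      rw [this, sum_mulVec', ← hc]
      congr 1; ext i
      rw [Matrix.smul_mulVec]
    · have hle : q.natDegree ≤ n - 1 := by
        apply Polynomial.natDegree_sum_le_of_forall_le
        intro i _
        refine le_trans (Polynomial.natDegree_mul_le) ?_
        simp only [Polynomial.natDegree_C, Polynomial.natDegree_X_pow, zero_add]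
        omega
      omega
  intro i
  have := congrArg (fun p => Polynomial.coeff p (i : ℕ)) hq0
  simp only [hqdef, Polynomial.finset_sum_coeff, Polynomial.coeff_C_mul,
    Polynomial.coeff_X_pow, Polynomial.coeff_zero] at this
  rw [Finset.sum_eq_single i] at this
  · simpa using this
  · intro j _ hj; simp [Fin.val_eq_val, Ne.symm hj]
  · simp

lemma centralizer_killer {n : ℕ} {K : Type*} [Field K] (hn : 0 < n)
    (A C : Matrix (Fin n) (Fin n) K) (hirr : Irreducible A.charpoly)
    (hcomm : A * C = C * A) (v : Fin n → K) (hv : v ≠ 0) (hCv : C.mulVec v = 0) : C = 0 := by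
  have : Nonempty (Fin n) := ⟨⟨0, hn⟩⟩
  let b := basisOfLinearIndependentOfCardEqFinrank (cyclic_li A hirr v hv)
    (by simp [Module.finrank_fin_fun])
  have hb : ∀ i, b i = (A ^ (i : ℕ)).mulVec v := fun i => by
    simp [b, coe_basisOfLinearIndependentOfCardEqFinrank]
  have hC : C.mulVecLin = (0 : Matrix (Fin n) (Fin n) K).mulVecLin := by
    apply b.ext
    intro i
    rw [hb i]
    have hcomm' : C * A ^ (i : ℕ) = A ^ (i : ℕ) * C :=
      ((Commute.pow_right (show Commute C A from hcomm.symm) (i : ℕ))).eq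
    have h0 : C *ᵥ (A ^ (i : ℕ) *ᵥ v) = 0 := by
      rw [Matrix.mulVec_mulVec, hcomm', ← Matrix.mulVec_mulVec, hCv, Matrix.mulVec_zero]
    simp [Matrix.mulVecLin_apply, h0]
  ext i j
  have := congrFun (congrArg (fun f => f.toFun (Pi.single j 1)) hC) i
  simpa [Matrix.mulVec_single] using this

lemma exists_poly {n : ℕ} {K : Type*} [Field K] (hn : 0 < n)
    (A B : Matrix (Fin n) (Fin n) K) (hirr : Irreducible A.charpoly)
    (hcomm : A * B = B * A) : ∃ q : K[X], B = Polynomial.aeval A q := by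
  have : Nonempty (Fin n) := ⟨⟨0, hn⟩⟩
  set v : Fin n → K := Pi.single ⟨0, hn⟩ 1 with hvdef
  have hv : v ≠ 0 := by
    intro h
    have := congrFun h ⟨0, hn⟩
    simp [hvdef] at this
  let b := basisOfLinearIndependentOfCardEqFinrank (cyclic_li A hirr v hv)
    (by simp [Module.finrank_fin_fun])
  have hb : ∀ i, b i = (A ^ (i : ℕ)).mulVec v := fun i => by
    simp [b, coe_basisOfLinearIndependentOfCardEqFinrank]
  set c := b.repr (B.mulVec v) with hcdef
  refine ⟨∑ i : Fin n, Polynomial.C (c i) * X ^ (i : ℕ), ?_⟩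
  set q : K[X] := ∑ i : Fin n, Polynomial.C (c i) * X ^ (i : ℕ) with hqdef
  have haq : Polynomial.aeval A q = ∑ i : Fin n, c i • A ^ (i : ℕ) := by
    simp [hqdef, map_sum, Algebra.smul_def]
  have hDv : (B - Polynomial.aeval A q).mulVec v = 0 := by
    rw [Matrix.sub_mulVec, haq, sum_mulVec']
    have : ∑ i : Fin n, (c i • A ^ (i : ℕ)).mulVec v = ∑ i : Fin n, c i • b i := by
      congr 1; ext i; rw [Matrix.smul_mulVec, hb i]
    have hrepr : ∑ i : Fin n, c i • b i = B.mulVec v := b.sum_repr _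
    rw [this, hrepr, sub_self]
  have hDcomm : A * (B - Polynomial.aeval A q) = (B - Polynomial.aeval A q) * A := by
    have h2 : A * Polynomial.aeval A q = Polynomial.aeval A q * A := by
      have h3 := _root_.map_mul (Polynomial.aeval (R := K) A) X q
      have h4 := _root_.map_mul (Polynomial.aeval (R := K) A) q X
      rw [Polynomial.aeval_X] at h3 h4
      rw [← h3, ← h4, mul_comm]
    rw [mul_sub, sub_mul, hcomm, h2]
  have := centralizer_killer hn A _ hirr hDcomm v hv hDv
  exact sub_eq_zero.mp this


/-- If `A ∈ SL(n,ℤ)` is hyperbolic with irreducible characteristic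
polynomial and distinct real eigenvalues, then every element of the centralizer of `A`
in `GL(n,ℤ)` other than `±Id` is hyperbolic (no complex eigenvalue of absolute value 1). -/
theorem stmt4 (n : ℕ) (hn : 0 < n) (A : Matrix (Fin n) (Fin n) ℤ)
    (hdet : A.det = 1)
    (hirr : Irreducible (Matrix.charpoly (A.map (Int.cast : ℤ → ℚ))))
    (hreal : ∀ z ∈ (Matrix.charpoly (A.map (Int.cast : ℤ → ℂ))).roots, z.im = 0)
    (hdistinct : (Matrix.charpoly (A.map (Int.cast : ℤ → ℂ))).roots.Nodup)
    (hhyp : ∀ z ∈ (Matrix.charpoly (A.map (Int.cast : ℤ → ℂ))).roots, ‖z‖ ≠ 1) :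
    ∀ B : Matrix (Fin n) (Fin n) ℤ, IsUnit B.det → A * B = B * A →
      B ≠ 1 → B ≠ -1 →
      ∀ z ∈ (Matrix.charpoly (B.map (Int.cast : ℤ → ℂ))).roots, ‖z‖ ≠ 1 := by
  intro B hBdet hAB hB1 hBm1 z hz habs
  classical
  set f : ℚ →+* ℂ := algebraMap ℚ ℂ with hfdef
  have hcomp : ∀ (M : Matrix (Fin n) (Fin n) ℤ),
      M.map (Int.cast : ℤ → ℂ) = (M.map (Int.cast : ℤ → ℚ)).map f := by
    intro M; rw [Matrix.map_map]; ext i j; simp [hfdef]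
  set Aq := A.map (Int.cast : ℤ → ℚ) with hAqdef
  set Bq := B.map (Int.cast : ℤ → ℚ) with hBqdef
  have hcommQ : Aq * Bq = Bq * Aq := by
    rw [hAqdef, hBqdef, ← map_mul_int, ← map_mul_int, hAB]
  set Ac := Aq.map f with hAcdef
  have hAc : A.map (Int.cast : ℤ → ℂ) = Ac := hcomp A
  obtain ⟨hpB0, hz0⟩ := Polynomial.mem_roots'.mp hz
  obtain ⟨q, hq⟩ := exists_poly hn Aq Bq hirr hcommQ
  have hBc : B.map (Int.cast : ℤ → ℂ) = Polynomial.aeval Ac (q.map f) := by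
    rw [hcomp B, ← hBqdef, hq, aeval_map_matrix, ← hAcdef]
  set r : ℂ[X] := Polynomial.C z - q.map f with hrdef
  have hr : Polynomial.aeval Ac r = Matrix.scalar (Fin n) z - B.map (Int.cast : ℤ → ℂ) := by
    rw [hrdef, map_sub, Polynomial.aeval_C, hBc]; congr 1
  have hdet_r : (Polynomial.aeval Ac r).det = 0 := by
    rw [hr, ← charpoly_eval']
    exact hz0
  have hp0 : Ac.charpoly ≠ 0 := (Ac.charpoly_monic).ne_zero
  have hex : ∃ lam ∈ Ac.charpoly.roots, r.eval lam = 0 := by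
    by_contra hcon
    push_neg at hcon
    have hcop : IsCoprime Ac.charpoly r := by
      rw [← EuclideanDomain.gcd_isUnit_iff]
      by_contra hdu
      obtain ⟨lam, hlam⟩ := IsAlgClosed.exists_root (EuclideanDomain.gcd Ac.charpoly r)
        (fun hdeg => hdu (Polynomial.isUnit_iff_degree_eq_zero.mpr hdeg))
      have hdvd1 : EuclideanDomain.gcd Ac.charpoly r ∣ Ac.charpoly := EuclideanDomain.gcd_dvd_left _ _
      have hdvd2 : EuclideanDomain.gcd Ac.charpoly r ∣ r := EuclideanDomain.gcd_dvd_right _ _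
      exact hcon lam (Polynomial.mem_roots'.mpr ⟨hp0, hlam.dvd hdvd1⟩) (hlam.dvd hdvd2)
    obtain ⟨a, b, hab⟩ := hcop
    have h1 : Polynomial.aeval Ac (a * Ac.charpoly + b * r) = 1 := by rw [hab]; simp
    have h2 : Polynomial.aeval Ac (a * Ac.charpoly + b * r)
        = Polynomial.aeval Ac b * Polynomial.aeval Ac r := by
      simp [map_add, _root_.map_mul, Matrix.aeval_self_charpoly]
    rw [h2] at h1
    have h3 := congrArg Matrix.det h1
    rw [Matrix.det_mul, hdet_r, mul_zero, Matrix.det_one] at h3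
    exact zero_ne_one h3
  obtain ⟨lam, hlam_mem, hlam_root⟩ := hex
  have hlam_im : lam.im = 0 := hreal lam (by rwa [hAc])
  have hz_eq : z = (q.map f).eval lam := by
    have := hlam_root
    rw [hrdef] at this
    simp only [Polynomial.eval_sub, Polynomial.eval_C] at this
    exact sub_eq_zero.mp this
  have hz_im : z.im = 0 := by
    rw [hz_eq]
    have hlam : lam = ((lam.re : ℝ) : ℂ) := by
      apply Complex.ext <;> simp [hlam_im]
    have hqf : q.map f = (q.map (algebraMap ℚ ℝ)).map Complex.ofRealHom := by
      rw [Polynomial.map_map]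
      exact congrArg q.map (congrArg _ (Subsingleton.elim _ _))
    rw [hlam, hqf, Polynomial.eval_map]
    rw [show ((lam.re : ℝ) : ℂ) = Complex.ofRealHom lam.re from rfl]
    rw [Polynomial.eval₂_at_apply]
    simp
  have hzre : z = ((z.re : ℝ) : ℂ) := by apply Complex.ext <;> simp [hz_im]
  have habs' : |z.re| = 1 := by
    rw [hzre, Complex.norm_real, Real.norm_eq_abs] at habs
    exact habs
  -- reduce the two cases to a rational eigenvalue statement
  have hevalQ : ∀ w : ℚ, z = f w → (Bq.charpoly).eval w = 0 := by
    intro w hw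
    have hBc_char : (B.map (Int.cast : ℤ → ℂ)).charpoly = (Bq.charpoly).map f := by
      rw [hcomp B, ← hBqdef, Matrix.charpoly_map]
    have h0 : ((Bq.charpoly).map f).eval z = 0 := by rw [← hBc_char]; exact hz0
    rw [hw, Polynomial.eval_map, Polynomial.eval₂_at_apply] at h0
    exact (map_eq_zero_iff f f.injective).mp h0
  have hkill : ∀ w : ℚ, z = f w → (Matrix.scalar (Fin n) w - Bq) = 0 := by
    intro w hw
    have hdet0 : (Matrix.scalar (Fin n) w - Bq).det = 0 := by
      rw [← charpoly_eval']; exact hevalQ w hw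
    obtain ⟨v, hv, hCv⟩ := (Matrix.exists_mulVec_eq_zero_iff).mpr hdet0
    refine centralizer_killer hn Aq _ hirr ?_ v hv hCv
    have hscal : Aq * Matrix.scalar (Fin n) w = Matrix.scalar (Fin n) w * Aq :=
      (Matrix.scalar_commute w (fun r => Commute.all _ r) Aq).symm
    rw [mul_sub, sub_mul, hscal, hcommQ]
  rcases (abs_eq (by norm_num : (0:ℝ) ≤ 1)).mp habs' with h1 | h1
  · apply hB1
    have hzeq1 : z = f 1 := by rw [hzre, h1]; simp [hfdef]
    have := hkill 1 hzeq1
    have hBq1 : Bq = 1 := by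
      have h2 : Matrix.scalar (Fin n) (1:ℚ) = 1 := by simp
      rw [h2] at this
      exact (sub_eq_zero.mp this).symm
    ext i j
    have hij := congrFun (congrFun (congrArg (fun M => (M : Matrix (Fin n) (Fin n) ℚ)) hBq1) i) j
    simp only [hBqdef] at hBq1
    have hij2 : ((B i j : ℤ) : ℚ) = (1 : Matrix (Fin n) (Fin n) ℚ) i j := by
      rw [← hBq1]; rfl
    rw [Matrix.one_apply] at hij2
    rw [Matrix.one_apply]
    split_ifs at hij2 ⊢ with h
    · exact_mod_cast hij2
    · exact_mod_cast hij2
  · apply hBm1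
    have hzeqm1 : z = f (-1) := by rw [hzre, h1]; simp [hfdef]
    have := hkill (-1) hzeqm1
    have hBqm1 : Bq = -1 := by
      have h2 : Matrix.scalar (Fin n) (-1:ℚ) = -1 := by rw [map_neg, _root_.map_one]
      rw [h2] at this
      exact (sub_eq_zero.mp this).symm
    ext i j
    simp only [hBqdef] at hBqm1
    have hij2 : ((B i j : ℤ) : ℚ) = (-1 : Matrix (Fin n) (Fin n) ℚ) i j := by
      rw [← hBqm1]; rfl
    rw [Matrix.neg_apply, Matrix.one_apply] at hij2
    rw [Matrix.neg_apply, Matrix.one_apply]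
    split_ifs at hij2 ⊢ with h
    · exact_mod_cast hij2
    · exact_mod_cast hij2
end

section
/- Let ρ: ℤ^d → GL(n,ℤ) be an embedding such that some matrix in the image has characteristic polynomial irreducible over ℚ (irreducibility). Then the centralizer of ρ(ℤ^d) in GL(n,ℚ) acts transitively on ℤ^n \ {0}. -/
open Matrix Polynomial

/-!
Let `A = ρ(m)` have irreducible characteristic polynomial `χ` of degree `n`. A nonzero polynomial
`p` of degree `< n` is coprime to `χ`, so `p(A)` is invertible by Cayley–Hamilton. Hence for
`v ≠ 0` the map `p ↦ p(A) v` on polynomials of degree `< n` is injective, and by dimension count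
onto `ℚ^n`: every `w ≠ 0` is `p(A) v` with `p(A)` invertible. Since `ℤ^d` is abelian, `p(A)`
commutes with all of `ρ(ℤ^d)`.
-/

theorem Commute.aeval_left {R A : Type*} [CommSemiring R] [Semiring A] [Algebra R A] {a b : A}
    (h : Commute a b) (p : R[X]) : Commute (aeval a p) b := by
  have ha : a ∈ Subalgebra.centralizer R {b} := by
    simpa [Subalgebra.mem_centralizer_iff] using h.symm.eq
  have hp : aeval a p ∈ Subalgebra.centralizer R {b} :=
    Algebra.adjoin_le (Set.singleton_subset_iff.mpr ha) (aeval_mem_adjoin_singleton R a)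
  exact ((Subalgebra.mem_centralizer_iff R).mp hp b rfl).symm

theorem Polynomial.isUnit_aeval_of_isCoprime {R A : Type*} [CommSemiring R] [Semiring A]
    [Algebra R A] {a : A} {p q : R[X]} (hq : aeval a q = 0) (hqp : IsCoprime q p) :
    IsUnit (aeval a p) := by
  obtain ⟨u, v, huv⟩ := hqp
  have hleft : aeval a v * aeval a p = 1 := by
    simpa [hq] using congrArg (aeval a) huv
  refine ⟨⟨aeval a p, aeval a v, ?_, hleft⟩, rfl⟩
  rw [← map_mul, mul_comm, map_mul, hleft]

namespace Matrix

variable {K ι : Type*} [Field K] [Fintype ι] [DecidableEq ι] {A : Matrix ι ι K}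

theorem isUnit_aeval_of_irreducible_charpoly (hA : Irreducible A.charpoly) {p : K[X]}
    (hp0 : p ≠ 0) (hp : p.degree < Fintype.card ι) : IsUnit (aeval A p) :=
  isUnit_aeval_of_isCoprime (aeval_self_charpoly A) <| hA.coprime_iff_not_dvd.mpr <|
    A.charpoly_monic.not_dvd_of_degree_lt hp0 (by rwa [charpoly_degree_eq_dim])

theorem exists_degree_lt_aeval_mulVec_eq (hA : Irreducible A.charpoly) {v : ι → K} (hv : v ≠ 0)
    (w : ι → K) : ∃ p : K[X], p.degree < Fintype.card ι ∧ aeval A p *ᵥ v = w := by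
  set n := Fintype.card ι
  let L : degreeLT K n →ₗ[K] ι → K :=
    (mulVecBilin K K).flip v ∘ₗ (aeval A).toLinearMap ∘ₗ (degreeLT K n).subtype
  have hL : Function.Injective L := by
    rw [← LinearMap.ker_eq_bot, LinearMap.ker_eq_bot']
    rintro ⟨p, hp⟩ hLp
    refine Subtype.ext (by_contra fun hp0 => hv ?_)
    exact mulVec_injective_iff_isUnit.mpr (isUnit_aeval_of_irreducible_charpoly hA hp0
      (mem_degreeLT.mp hp)) (hLp.trans (mulVec_zero _).symm)
  have hrank : Module.finrank K (degreeLT K n) = Module.finrank K (ι → K) := by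
    rw [(degreeLTEquiv K n).finrank_eq, Module.finrank_fin_fun,
      Module.finrank_fintype_fun_eq_card]
  obtain ⟨⟨p, hp⟩, hLp⟩ := (LinearMap.injective_iff_surjective_of_finrank_eq_finrank hrank).mp hL w
  exact ⟨p, mem_degreeLT.mp hp, hLp⟩

end Matrix

theorem stmt5_general (n d : ℕ)
    (ρ : Multiplicative (Fin d → ℤ) →* GL (Fin n) ℤ)
    (hirr : ∃ m : Multiplicative (Fin d → ℤ), Irreducible
      (Matrix.charpoly ((ρ m : Matrix (Fin n) (Fin n) ℤ).map (Int.cast : ℤ → ℚ)))) :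
    ∀ v w : Fin n → ℤ, v ≠ 0 → w ≠ 0 →
      ∃ C : Matrix (Fin n) (Fin n) ℚ, IsUnit C.det ∧
        (∀ m : Multiplicative (Fin d → ℤ),
          C * (ρ m : Matrix (Fin n) (Fin n) ℤ).map (Int.cast : ℤ → ℚ) =
            (ρ m : Matrix (Fin n) (Fin n) ℤ).map (Int.cast : ℤ → ℚ) * C) ∧
        C.mulVec (fun i => (v i : ℚ)) = (fun i => (w i : ℚ)) := by
  intro v w hv hw
  obtain ⟨m, hirr⟩ := hirr
  have cast_ne_zero (u : Fin n → ℤ) (hu : u ≠ 0) : (fun i => (u i : ℚ)) ≠ 0 :=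
    fun h => hu (funext fun i => by simpa using congrFun h i)
  obtain ⟨p, hpdeg, hpvw⟩ :=
    exists_degree_lt_aeval_mulVec_eq hirr (cast_ne_zero v hv) (fun i => (w i : ℚ))
  have hp0 : p ≠ 0 := by
    rintro rfl
    exact cast_ne_zero w hw (by simpa using hpvw.symm)
  have hcomm (m' : Multiplicative (Fin d → ℤ)) :
      Commute ((ρ m : Matrix (Fin n) (Fin n) ℤ).map (Int.cast : ℤ → ℚ))
        ((ρ m' : Matrix (Fin n) (Fin n) ℤ).map (Int.cast : ℤ → ℚ)) :=
    ((Commute.all m m').map ρ).units_val.map (Int.castRingHom ℚ).mapMatrix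
  exact ⟨aeval _ p, (isUnit_iff_isUnit_det _).mp (isUnit_aeval_of_irreducible_charpoly hirr hp0 hpdeg),
    fun m' => ((hcomm m').aeval_left p).eq, hpvw⟩

/-- If `ρ : ℤ^d → GL(n,ℤ)` is an embedding whose image contains a matrix
with characteristic polynomial irreducible over `ℚ`, then the centralizer of `ρ(ℤ^d)`
in `GL(n,ℚ)` acts transitively on `ℤ^n \ {0}`. -/
theorem stmt5 (n d : ℕ) (hn : 0 < n)
    (ρ : Multiplicative (Fin d → ℤ) →* GL (Fin n) ℤ)
    (hemb : Function.Injective ρ)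
    (hirr : ∃ m : Multiplicative (Fin d → ℤ), Irreducible
      (Matrix.charpoly ((ρ m : Matrix (Fin n) (Fin n) ℤ).map (Int.cast : ℤ → ℚ)))) :
    ∀ v w : Fin n → ℤ, v ≠ 0 → w ≠ 0 →
      ∃ C : Matrix (Fin n) (Fin n) ℚ, IsUnit C.det ∧
        (∀ m : Multiplicative (Fin d → ℤ),
          C * (ρ m : Matrix (Fin n) (Fin n) ℤ).map (Int.cast : ℤ → ℚ) =
            (ρ m : Matrix (Fin n) (Fin n) ℤ).map (Int.cast : ℤ → ℚ) * C) ∧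
        C.mulVec (fun i => (v i : ℚ)) = (fun i => (w i : ℚ)) :=
  stmt5_general n d ρ hirr
end

section
/- Let α and α′ be irreducible cyclic ℤ^d-actions by automorphisms of 𝕋^n, given by embeddings ρ_α, ρ_{α′}: ℤ^d → GL(n,ℤ). If ρ_α and ρ_{α′} are conjugate by a matrix in GL(n,ℚ), then they are conjugate by a matrix in GL(n,ℤ); i.e., the actions are algebraically isomorphic. -/
open Matrix Polynomial

section aux

variable {n d : ℕ}

private noncomputable def evL (n : ℕ) (k : Fin n → ℤ) :
    Matrix (Fin n) (Fin n) ℤ →ₗ[ℤ] (Fin n → ℤ) where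
  toFun A := A.mulVec k
  map_add' A B := Matrix.add_mulVec A B k
  map_smul' c A := Matrix.smul_mulVec c A k

/-- If the orbit of `k` spans, then a matrix in the span of the `ρ m` killing `k` is zero. -/
private theorem aux_zero (ρ : Multiplicative (Fin d → ℤ) →* GL (Fin n) ℤ)
    (k : Fin n → ℤ)
    (hk : Submodule.span ℤ
      {x : Fin n → ℤ | ∃ m : Multiplicative (Fin d → ℤ),
        (ρ m : Matrix (Fin n) (Fin n) ℤ).mulVec k = x} = ⊤)
    (c : Multiplicative (Fin d → ℤ) →₀ ℤ)
    (hc : (Finsupp.linearCombination ℤ (fun m => (ρ m : Matrix (Fin n) (Fin n) ℤ)) c).mulVec k = 0) :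
    Finsupp.linearCombination ℤ (fun m => (ρ m : Matrix (Fin n) (Fin n) ℤ)) c = 0 := by
  have hcommgen : ∀ B ∈ Submodule.span ℤ
      (Set.range fun m' => (ρ m' : Matrix (Fin n) (Fin n) ℤ)),
      ∀ m : Multiplicative (Fin d → ℤ),
      B * (ρ m : Matrix (Fin n) (Fin n) ℤ) = (ρ m : Matrix (Fin n) (Fin n) ℤ) * B := by
    intro B hB m
    induction hB using Submodule.span_induction with
    | mem x hx =>
      obtain ⟨m', rfl⟩ := hx
      have h : ρ m' * ρ m = ρ m * ρ m' := by rw [← _root_.map_mul, ← _root_.map_mul, mul_comm]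
      calc (ρ m' : Matrix (Fin n) (Fin n) ℤ) * ρ m
          = ((ρ m' * ρ m : GL (Fin n) ℤ) : Matrix (Fin n) (Fin n) ℤ) := rfl
        _ = ((ρ m * ρ m' : GL (Fin n) ℤ) : Matrix (Fin n) (Fin n) ℤ) := by rw [h]
        _ = (ρ m : Matrix (Fin n) (Fin n) ℤ) * ρ m' := rfl
    | zero => simp
    | add x y _ _ hx hy => rw [add_mul, mul_add, hx, hy]
    | smul a x _ hx => rw [smul_mul_assoc, mul_smul_comm, hx]
  set A := Finsupp.linearCombination ℤ (fun m => (ρ m : Matrix (Fin n) (Fin n) ℤ)) c with hA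
  have hmem : A ∈ Submodule.span ℤ
      (Set.range fun m' => (ρ m' : Matrix (Fin n) (Fin n) ℤ)) := by
    rw [hA, Finsupp.linearCombination_apply]
    exact Submodule.sum_mem _ fun m' _ =>
      Submodule.smul_mem _ _ (Submodule.subset_span ⟨m', rfl⟩)
  have hcomm := hcommgen A hmem
  -- A kills everything
  have hall : ∀ x : Fin n → ℤ, A.mulVec x = 0 := by
    intro x
    have hx : x ∈ Submodule.span ℤ
        {x : Fin n → ℤ | ∃ m : Multiplicative (Fin d → ℤ),
          (ρ m : Matrix (Fin n) (Fin n) ℤ).mulVec k = x} := by rw [hk]; trivial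
    have hle : Submodule.span ℤ
        {x : Fin n → ℤ | ∃ m : Multiplicative (Fin d → ℤ),
          (ρ m : Matrix (Fin n) (Fin n) ℤ).mulVec k = x} ≤ LinearMap.ker (Matrix.toLin' A) := by
      rw [Submodule.span_le]
      rintro _ ⟨m, rfl⟩
      simp only [SetLike.mem_coe, LinearMap.mem_ker, Matrix.toLin'_apply]
      rw [Matrix.mulVec_mulVec, hcomm, ← Matrix.mulVec_mulVec, hc, Matrix.mulVec_zero]
    simpa [Matrix.toLin'_apply] using hle hx
  ext i j
  have h := congrFun (hall (Pi.single j 1)) i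
  simpa using h

end aux

/-- Two irreducible cyclic `ℤ^d`-actions by automorphisms of `𝕋^n`,
whose embeddings `ρ, ρ' : ℤ^d → GL(n,ℤ)` are conjugate over `ℚ`, are conjugate over
`ℤ`; i.e. the actions are algebraically isomorphic. -/
theorem stmt6 (n d : ℕ) (hn : 0 < n)
    (ρ ρ' : Multiplicative (Fin d → ℤ) →* GL (Fin n) ℤ)
    (hemb : Function.Injective ρ) (hemb' : Function.Injective ρ')
    (hirr : ∃ m : Multiplicative (Fin d → ℤ), Irreducible
      (Matrix.charpoly ((ρ m : Matrix (Fin n) (Fin n) ℤ).map (Int.cast : ℤ → ℚ))))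
    (hcyc : ∃ k : Fin n → ℤ, Submodule.span ℤ
      {x : Fin n → ℤ | ∃ m : Multiplicative (Fin d → ℤ),
        (ρ m : Matrix (Fin n) (Fin n) ℤ).mulVec k = x} = ⊤)
    (hcyc' : ∃ k : Fin n → ℤ, Submodule.span ℤ
      {x : Fin n → ℤ | ∃ m : Multiplicative (Fin d → ℤ),
        (ρ' m : Matrix (Fin n) (Fin n) ℤ).mulVec k = x} = ⊤)
    (hconjQ : ∃ C : Matrix (Fin n) (Fin n) ℚ, IsUnit C.det ∧
      ∀ m : Multiplicative (Fin d → ℤ),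
        C * (ρ m : Matrix (Fin n) (Fin n) ℤ).map (Int.cast : ℤ → ℚ) =
          (ρ' m : Matrix (Fin n) (Fin n) ℤ).map (Int.cast : ℤ → ℚ) * C) :
    ∃ U : Matrix (Fin n) (Fin n) ℤ, IsUnit U.det ∧
      ∀ m : Multiplicative (Fin d → ℤ),
        U * (ρ m : Matrix (Fin n) (Fin n) ℤ) = (ρ' m : Matrix (Fin n) (Fin n) ℤ) * U := by
  classical
  obtain ⟨k, hk⟩ := hcyc
  obtain ⟨k', hk'⟩ := hcyc'
  obtain ⟨C, hCdet, hCconj⟩ := hconjQ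
  set G := Multiplicative (Fin d → ℤ)
  set v : G → Matrix (Fin n) (Fin n) ℤ := fun m => (ρ m : Matrix (Fin n) (Fin n) ℤ) with hv
  set v' : G → Matrix (Fin n) (Fin n) ℤ := fun m => (ρ' m : Matrix (Fin n) (Fin n) ℤ) with hv'
  set lc : (G →₀ ℤ) →ₗ[ℤ] Matrix (Fin n) (Fin n) ℤ := Finsupp.linearCombination ℤ v with hlc
  set lc' : (G →₀ ℤ) →ₗ[ℤ] Matrix (Fin n) (Fin n) ℤ := Finsupp.linearCombination ℤ v' with hlc'
  -- conjugation identity for linear combinations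
  have keyC : ∀ c : G →₀ ℤ,
      C * (lc c).map (Int.cast : ℤ → ℚ) = (lc' c).map (Int.cast : ℤ → ℚ) * C := by
    intro c
    induction c using Finsupp.induction_linear with
    | zero => simp
    | add f g hf hg =>
      rw [map_add, map_add]
      have h1 : ((lc f + lc g).map (Int.cast : ℤ → ℚ)) =
          (lc f).map Int.cast + (lc g).map Int.cast := by
        ext i j; simp
      have h2 : ((lc' f + lc' g).map (Int.cast : ℤ → ℚ)) =
          (lc' f).map Int.cast + (lc' g).map Int.cast := by
        ext i j; simp
      rw [h1, h2, mul_add, add_mul, hf, hg]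
    | single m b =>
      have h1 : ((lc (Finsupp.single m b)).map (Int.cast : ℤ → ℚ)) =
          b • (v m).map Int.cast := by
        rw [hlc, Finsupp.linearCombination_single]
        ext i j
        simp only [Matrix.map_apply, Matrix.smul_apply, smul_eq_mul]
        push_cast [zsmul_eq_mul]
        ring
      have h2 : ((lc' (Finsupp.single m b)).map (Int.cast : ℤ → ℚ)) =
          b • (v' m).map Int.cast := by
        rw [hlc', Finsupp.linearCombination_single]
        ext i j
        simp only [Matrix.map_apply, Matrix.smul_apply, smul_eq_mul]
        push_cast [zsmul_eq_mul]
        ring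
      rw [h1, h2, mul_smul_comm, smul_mul_assoc, hCconj m]
  -- zero iff zero
  have kerIff : ∀ c : G →₀ ℤ, lc c = 0 ↔ lc' c = 0 := by
    intro c
    constructor
    · intro h
      have h2 : (lc' c).map (Int.cast : ℤ → ℚ) * C = 0 := by
        rw [← keyC, h]; simp
      have h3 : (lc' c).map (Int.cast : ℤ → ℚ) = 0 := by
        have := congrArg (· * C⁻¹) h2
        simpa [mul_assoc, Matrix.mul_nonsing_inv C hCdet] using this
      ext i j
      have := congrFun (congrFun h3 i) j
      simpa using this
    · intro h
      have h2 : C * (lc c).map (Int.cast : ℤ → ℚ) = 0 := by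
        rw [keyC, h]; simp
      have h3 : (lc c).map (Int.cast : ℤ → ℚ) = 0 := by
        have := congrArg (C⁻¹ * ·) h2
        simpa [← mul_assoc, Matrix.nonsing_inv_mul C hCdet] using this
      ext i j
      have := congrFun (congrFun h3 i) j
      simpa using this
  set π : (G →₀ ℤ) →ₗ[ℤ] (Fin n → ℤ) := (evL n k).comp lc with hπ
  set π' : (G →₀ ℤ) →ₗ[ℤ] (Fin n → ℤ) := (evL n k').comp lc' with hπ'
  have hπ_apply : ∀ c, π c = (lc c).mulVec k := fun c => rfl
  have hπ'_apply : ∀ c, π' c = (lc' c).mulVec k' := fun c => rfl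
  have hπsurj : Function.Surjective π := by
    rw [← LinearMap.range_eq_top, ← top_le_iff, ← hk, Submodule.span_le]
    rintro _ ⟨m, rfl⟩
    exact ⟨Finsupp.single m 1, by simp [hπ_apply, hlc, hv, Finsupp.linearCombination_single]⟩
  have hπ'surj : Function.Surjective π' := by
    rw [← LinearMap.range_eq_top, ← top_le_iff, ← hk', Submodule.span_le]
    rintro _ ⟨m, rfl⟩
    exact ⟨Finsupp.single m 1, by simp [hπ'_apply, hlc', hv', Finsupp.linearCombination_single]⟩
  have hker : LinearMap.ker π = LinearMap.ker π' := by
    ext c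
    simp only [LinearMap.mem_ker, hπ_apply, hπ'_apply]
    constructor
    · intro h
      have h0 : lc c = 0 := aux_zero ρ k hk c h
      rw [(kerIff c).mp h0]; simp
    · intro h
      have h0 : lc' c = 0 := aux_zero ρ' k' hk' c h
      rw [(kerIff c).mpr h0]; simp
  -- build the equivalence
  set e : ((G →₀ ℤ) ⧸ LinearMap.ker π) ≃ₗ[ℤ] (Fin n → ℤ) :=
    π.quotKerEquivOfSurjective hπsurj with he
  have he_mk : ∀ c, e (Submodule.Quotient.mk c) = π c := fun c => rfl
  set f : (Fin n → ℤ) →ₗ[ℤ] (Fin n → ℤ) :=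
    (Submodule.liftQ (LinearMap.ker π) π' (le_of_eq hker)).comp e.symm.toLinearMap with hf
  have hfπ : ∀ c, f (π c) = π' c := by
    intro c
    have : e.symm (π c) = Submodule.Quotient.mk c := by
      rw [← he_mk c, LinearEquiv.symm_apply_apply]
    simp [hf, this, Submodule.liftQ_apply]
  set e' : ((G →₀ ℤ) ⧸ LinearMap.ker π') ≃ₗ[ℤ] (Fin n → ℤ) :=
    π'.quotKerEquivOfSurjective hπ'surj with he'
  have he'_mk : ∀ c, e' (Submodule.Quotient.mk c) = π' c := fun c => rfl
  set f' : (Fin n → ℤ) →ₗ[ℤ] (Fin n → ℤ) :=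
    (Submodule.liftQ (LinearMap.ker π') π (le_of_eq hker.symm)).comp e'.symm.toLinearMap with hf'
  have hf'π : ∀ c, f' (π' c) = π c := by
    intro c
    have : e'.symm (π' c) = Submodule.Quotient.mk c := by
      rw [← he'_mk c, LinearEquiv.symm_apply_apply]
    simp [hf', this, Submodule.liftQ_apply]
  have hinv : f'.comp f = LinearMap.id := by
    refine LinearMap.ext fun y => ?_
    obtain ⟨c, rfl⟩ := hπsurj y
    simp only [LinearMap.comp_apply, LinearMap.id_apply, hfπ, hf'π]
  -- intertwining on the dense image
  have hint : ∀ (m : G) (x : Fin n → ℤ), f ((v m).mulVec x) = (v' m).mulVec (f x) := by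
    intro m x
    obtain ⟨c, rfl⟩ := hπsurj x
    have hshift : ∀ (w : G → Matrix (Fin n) (Fin n) ℤ)
        (hw : ∀ a b : G, w (a * b) = w a * w b),
        w m * Finsupp.linearCombination ℤ w c =
          Finsupp.linearCombination ℤ w (Finsupp.mapDomain (fun m' => m * m') c) := by
      intro w hw
      rw [Finsupp.linearCombination_mapDomain, Finsupp.linearCombination_apply,
        Finsupp.linearCombination_apply, Finsupp.mul_sum]
      refine Finset.sum_congr rfl fun m' _ => ?_
      simp only [Function.comp_apply]
      rw [mul_smul_comm, ← hw m m']
    have hwρ : ∀ a b : G, v (a * b) = v a * v b := by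
      intro a b; simp only [hv, ← Units.val_mul, ← _root_.map_mul]
    have hwρ' : ∀ a b : G, v' (a * b) = v' a * v' b := by
      intro a b; simp only [hv', ← Units.val_mul, ← _root_.map_mul]
    have l1 : (v m).mulVec (π c) = π (Finsupp.mapDomain (fun m' => m * m') c) := by
      rw [hπ_apply, hπ_apply, Matrix.mulVec_mulVec, hlc, hshift v hwρ]
    have l2 : (v' m).mulVec (π' c) = π' (Finsupp.mapDomain (fun m' => m * m') c) := by
      rw [hπ'_apply, hπ'_apply, Matrix.mulVec_mulVec, hlc', hshift v' hwρ']
    rw [l1, hfπ, hfπ, ← l2]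
  -- convert to matrices
  refine ⟨LinearMap.toMatrix' f, ?_, ?_⟩
  · have h1 : LinearMap.toMatrix' f' * LinearMap.toMatrix' f = 1 := by
      rw [← LinearMap.toMatrix'_comp, hinv, LinearMap.toMatrix'_id]
    have hdet : (LinearMap.toMatrix' f').det * (LinearMap.toMatrix' f).det = 1 := by
      rw [← Matrix.det_mul, h1, Matrix.det_one]
    exact IsUnit.of_mul_eq_one _ (by rw [mul_comm]; exact hdet)
  · intro m
    have hcomp : f.comp (Matrix.toLin' (v m)) = (Matrix.toLin' (v' m)).comp f := by
      refine LinearMap.ext fun x => ?_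
      simp only [LinearMap.comp_apply, Matrix.toLin'_apply]
      exact hint m x
    calc LinearMap.toMatrix' f * (ρ m : Matrix (Fin n) (Fin n) ℤ)
        = LinearMap.toMatrix' f * LinearMap.toMatrix' (Matrix.toLin' (v m)) := by
          rw [LinearMap.toMatrix'_toLin']
      _ = LinearMap.toMatrix' (f.comp (Matrix.toLin' (v m))) := by
          rw [LinearMap.toMatrix'_comp]
      _ = LinearMap.toMatrix' ((Matrix.toLin' (v' m)).comp f) := by rw [hcomp]
      _ = LinearMap.toMatrix' (Matrix.toLin' (v' m)) * LinearMap.toMatrix' f := by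
          rw [LinearMap.toMatrix'_comp]
      _ = (ρ' m : Matrix (Fin n) (Fin n) ℤ) * LinearMap.toMatrix' f := by
          rw [LinearMap.toMatrix'_toLin']
end

section
/- Let λ₁,…,λ_d be units in a number field K with ℤ[λ₁,…,λ_d] ⊊ O ⊆ O_K for a subring O. Then the minimal action α_{λ̄}^{min} on the lattice ℤ[λ₁,…,λ_d] and the action α_{λ̄,O} on the lattice O are not algebraically isomorphic, even up to a time change: specifically, the centralizer in M(n,ℤ) of the minimal action corresponds exactly to multiplications by elements of ℤ[λ₁,…,λ_d], while the centralizer of α_{λ̄,O} contains multiplications by all elements of O. -/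
open Matrix Polynomial

/-- Let `λ₁,…,λ_d` be algebraic units (in a number field realized in
`ℂ`) and let `O` be a subring of the ring of integers with `ℤ[λ₁,…,λ_d] ⊊ O ⊆ O_K`,
both lattices invariant under the `ℤ^d`-action `m ↦` multiplication by `∏ λᵢ^{mᵢ}`.
Then: multiplications preserving `ℤ[λ₁,…,λ_d]` are exactly multiplications by its own
elements, the centralizer of the action on `O` contains multiplication by every
element of `O`, and the two actions are not algebraically isomorphic even up to a
time change `C ∈ GL(d,ℤ)`. -/
theorem stmt10 (n d : ℕ) (hn : 0 < n) (lam : Fin d → ℂ)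
    (hintlam : ∀ i, IsIntegral ℤ (lam i))
    (hunit : ∀ i, lam i ≠ 0 ∧ IsIntegral ℤ (lam i)⁻¹)
    (O : Subalgebra ℤ ℂ)
    (hRO : Algebra.adjoin ℤ (Set.range lam) ≤ O)
    (hne : Algebra.adjoin ℤ (Set.range lam) ≠ O)
    (hintO : ∀ x ∈ O, IsIntegral ℤ x)
    (bR : Module.Basis (Fin n) ℤ (Algebra.adjoin ℤ (Set.range lam)))
    (bO : Module.Basis (Fin n) ℤ O)
    (hinvR : ∀ (m : Fin d → ℤ), ∀ x ∈ Algebra.adjoin ℤ (Set.range lam),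
      (∏ i, lam i ^ m i) * x ∈ Algebra.adjoin ℤ (Set.range lam))
    (hinvO : ∀ (m : Fin d → ℤ), ∀ x ∈ O, (∏ i, lam i ^ m i) * x ∈ O) :
    (∀ μ : ℂ, (∀ x ∈ Algebra.adjoin ℤ (Set.range lam),
        μ * x ∈ Algebra.adjoin ℤ (Set.range lam)) → μ ∈ Algebra.adjoin ℤ (Set.range lam)) ∧
    (∀ μ ∈ O, ∀ x ∈ O, μ * x ∈ O) ∧
    ¬ ∃ (φ : (Algebra.adjoin ℤ (Set.range lam)) ≃ₗ[ℤ] O)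
        (C : Matrix (Fin d) (Fin d) ℤ), IsUnit C.det ∧
        ∀ (m : Fin d → ℤ) (x : (Algebra.adjoin ℤ (Set.range lam))),
          (φ ⟨(∏ i, lam i ^ (C.mulVec m) i) * (x : ℂ),
              hinvR (C.mulVec m) (x : ℂ) x.2⟩ : ℂ) =
            (∏ i, lam i ^ m i) * (φ x : ℂ) := by
  set R := Algebra.adjoin ℤ (Set.range lam) with hRdef
  refine ⟨fun μ hμ => by simpa using hμ 1 (one_mem R), fun μ hμ x hx => O.mul_mem hμ hx, ?_⟩
  rintro ⟨φ, C, hC, hφ⟩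
  set T : Set ℂ := Set.range (fun m : Fin d → ℤ => ∏ i, lam i ^ m i) with hTdef
  have hTR : ∀ x ∈ T, x ∈ R := by
    rintro x ⟨m, rfl⟩
    simpa using hinvR m 1 (one_mem R)
  have h1T : (1 : ℂ) ∈ T := ⟨0, by simp⟩
  have hlamT : ∀ i, lam i ∈ T := by
    intro i
    refine ⟨Pi.single i 1, ?_⟩
    simp [Pi.single_apply]
  have hmulT : ∀ a ∈ T, ∀ b ∈ T, a * b ∈ T := by
    rintro a ⟨m, rfl⟩ b ⟨m', rfl⟩
    refine ⟨m + m', ?_⟩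
    rw [← Finset.prod_mul_distrib]
    refine Finset.prod_congr rfl fun i _ => ?_
    rw [Pi.add_apply, zpow_add₀ (hunit i).1]
  have hmulS : ∀ a ∈ Submodule.span ℤ T, ∀ b ∈ Submodule.span ℤ T,
      a * b ∈ Submodule.span ℤ T := by
    intro a ha
    induction ha using Submodule.span_induction with
    | mem x hx =>
      intro b hb
      induction hb using Submodule.span_induction with
      | mem y hy => exact Submodule.subset_span (hmulT x hx y hy)
      | zero => simpa using Submodule.zero_mem _
      | add y z _ _ py pz => rw [mul_add]; exact Submodule.add_mem _ py pz
      | smul z y _ py => rw [mul_smul_comm]; exact Submodule.smul_mem _ _ py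
    | zero => intro b hb; simpa using Submodule.zero_mem _
    | add x y _ _ px py =>
      intro b hb; rw [add_mul]; exact Submodule.add_mem _ (px b hb) (py b hb)
    | smul z x _ px =>
      intro b hb; rw [smul_mul_assoc]; exact Submodule.smul_mem _ _ (px b hb)
  have hRspan : ∀ x ∈ R, x ∈ Submodule.span ℤ T := by
    intro x hx
    induction hx using Algebra.adjoin_induction with
    | mem y hy =>
      obtain ⟨i, rfl⟩ := hy
      exact Submodule.subset_span (hlamT i)
    | algebraMap r =>
      have : (algebraMap ℤ ℂ r) = r • (1 : ℂ) := by simp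
      rw [this]
      exact Submodule.smul_mem _ _ (Submodule.subset_span h1T)
    | add x y _ _ px py => exact Submodule.add_mem _ px py
    | mul x y _ _ px py => exact hmulS x px y py
  set u : ℂ := (φ 1 : ℂ) with hudef
  have hu0 : u ≠ 0 := by
    intro h
    have h10 : (1 : R) = 0 := φ.injective (by rw [φ.map_zero]; exact Subtype.ext h)
    simpa using congrArg Subtype.val h10
  have hmono : ∀ (k : Fin d → ℤ) (hk : (∏ i, lam i ^ k i) ∈ R),
      (φ ⟨∏ i, lam i ^ k i, hk⟩ : ℂ) = (∏ i, lam i ^ (C⁻¹.mulVec k) i) * u := by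
    intro k hk
    have hCC : C.mulVec (C⁻¹.mulVec k) = k := by
      rw [Matrix.mulVec_mulVec, Matrix.mul_nonsing_inv C hC, Matrix.one_mulVec]
    have key := hφ (C⁻¹.mulVec k) (1 : R)
    have e1 : (⟨(∏ i, lam i ^ (C.mulVec (C⁻¹.mulVec k)) i) * ((1 : R) : ℂ),
        hinvR (C.mulVec (C⁻¹.mulVec k)) ((1 : R) : ℂ) (1 : R).2⟩ : R)
        = ⟨∏ i, lam i ^ k i, hk⟩ := Subtype.ext (by rw [hCC]; simp)
    rw [e1] at key
    simpa using key
  have key : ∀ x, ∀ _ : x ∈ Submodule.span ℤ T,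
      ∃ hx : x ∈ R, ∃ r ∈ R, (φ ⟨x, hx⟩ : ℂ) = u * r := by
    intro x hx
    induction hx using Submodule.span_induction with
    | mem y hy =>
      obtain ⟨k, rfl⟩ := hy
      refine ⟨hTR _ ⟨k, rfl⟩, ∏ i, lam i ^ (C⁻¹.mulVec k) i, hTR _ ⟨_, rfl⟩, ?_⟩
      rw [hmono k (hTR _ ⟨k, rfl⟩), mul_comm]
    | zero =>
      refine ⟨zero_mem R, 0, zero_mem R, ?_⟩
      have : (⟨(0 : ℂ), zero_mem R⟩ : R) = 0 := rfl
      rw [this, φ.map_zero, mul_zero]; rfl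
    | add x y _ _ px py =>
      obtain ⟨hx, r, hr, hxr⟩ := px
      obtain ⟨hy, s, hs, hys⟩ := py
      refine ⟨add_mem hx hy, r + s, add_mem hr hs, ?_⟩
      have : (⟨x + y, add_mem hx hy⟩ : R) = ⟨x, hx⟩ + ⟨y, hy⟩ := rfl
      rw [this, φ.map_add, mul_add]
      push_cast
      rw [hxr, hys]
    | smul z x _ px =>
      obtain ⟨hx, r, hr, hxr⟩ := px
      refine ⟨Submodule.smul_mem (Subalgebra.toSubmodule R) z hx, z • r,
        Submodule.smul_mem (Subalgebra.toSubmodule R) z hr, ?_⟩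
      have : (⟨z • x, _⟩ : R) = z • (⟨x, hx⟩ : R) := rfl
      rw [this, LinearEquiv.map_smul φ z (⟨x, hx⟩ : R)]
      have : ((z • φ ⟨x, hx⟩ : O) : ℂ) = z • (φ ⟨x, hx⟩ : ℂ) := rfl
      rw [this, hxr, mul_smul_comm]
  have himg : ∀ x : R, ∃ r ∈ R, (φ x : ℂ) = u * r := by
    intro x
    obtain ⟨hx', r, hr, heq⟩ := key x.1 (hRspan x.1 x.2)
    have hx2 : x = ⟨x.1, hx'⟩ := Subtype.ext rfl
    rw [hx2]
    exact ⟨r, hr, heq⟩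
  have huR : u ∈ R := by
    obtain ⟨x, hxeq⟩ := φ.surjective ⟨u * u, O.mul_mem (φ 1).2 (φ 1).2⟩
    obtain ⟨r, hrR, hreq⟩ := himg x
    have h2 : u * u = u * r := by
      rw [← hreq, hxeq]
    exact (mul_left_cancel₀ hu0 h2) ▸ hrR
  have hOR : O ≤ R := by
    intro y hy
    obtain ⟨x, hxeq⟩ := φ.surjective ⟨y, hy⟩
    obtain ⟨r, hrR, hreq⟩ := himg x
    have : y = u * r := by rw [← hreq, hxeq]
    exact this ▸ R.mul_mem huR hrR
  exact hne (le_antisymm hRO hOR)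
end

section
/- An irreducible action α_{λ̄,O} of ℤ^d on the lattice O (a subring with ℤ[λ₁,…,λ_d] ⊆ O ⊆ O_K) by multiplications by units λ₁,…,λ_d is cyclic if and only if O = ℤ[λ₁,…,λ_d]. -/
open Matrix Polynomial

/-- If `x ≠ 0` and `x⁻¹` is integral over `ℤ`, then `x⁻¹ ∈ ℤ[x]`. -/
lemma aux_inv_mem_adjoin {x : ℂ} (hx : x ≠ 0) (h : IsIntegral ℤ x⁻¹) :
    x⁻¹ ∈ Algebra.adjoin ℤ {x} := by
  obtain ⟨p, hpm, hpe⟩ := h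
  set k := p.natDegree with hk
  have hk1 : 1 ≤ k := by
    by_contra hcon
    have hk0 : k = 0 := by omega
    have : p = 1 := Polynomial.eq_one_of_monic_natDegree_zero hpm hk0
    rw [this] at hpe
    simp at hpe
  have h0 : (0 : ℂ) = ∑ j ∈ Finset.range (k + 1), (p.coeff j : ℂ) * x⁻¹ ^ j := by
    have h := Polynomial.aeval_eq_sum_range (R := ℤ) (S := ℂ) (x := x⁻¹) (p := p)
    rw [Polynomial.aeval_def, hpe] at h
    simpa [zsmul_eq_mul] using h
  have hmul := congrArg (fun z => z * x ^ (k - 1)) h0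
  simp only [zero_mul, Finset.sum_mul] at hmul
  rw [Finset.sum_range_succ] at hmul
  have hck : (p.coeff k : ℂ) = 1 := by
    rw [hk]; exact_mod_cast congrArg (Int.cast : ℤ → ℂ) hpm.coeff_natDegree
  have hlast : (p.coeff k : ℂ) * x⁻¹ ^ k * x ^ (k - 1) = x⁻¹ := by
    rw [hck, one_mul]
    have : x ^ k = x ^ (k - 1) * x := by
      rw [← pow_succ]; congr 1; omega
    rw [inv_pow, this]
    field_simp
  rw [hlast] at hmul
  have hterm : ∀ j ∈ Finset.range k,
      (p.coeff j : ℂ) * x⁻¹ ^ j * x ^ (k - 1) = (p.coeff j : ℂ) * x ^ (k - 1 - j) := by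
    intro j hj
    rw [Finset.mem_range] at hj
    have : x ^ (k - 1) = x ^ j * x ^ (k - 1 - j) := by
      rw [← pow_add]; congr 1; omega
    rw [inv_pow, this, mul_assoc, inv_mul_cancel_left₀ (pow_ne_zero j hx)]
  rw [Finset.sum_congr rfl hterm] at hmul
  have hfin : x⁻¹ = -∑ j ∈ Finset.range k, (p.coeff j : ℂ) * x ^ (k - 1 - j) := by
    linear_combination -hmul
  rw [hfin]
  refine neg_mem (sum_mem fun j _ => ?_)
  have : (p.coeff j : ℂ) * x ^ (k - 1 - j) = (p.coeff j) • x ^ (k - 1 - j) := by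
    simp [zsmul_eq_mul]
  rw [this]
  exact (Algebra.adjoin ℤ {x}).zsmul_mem ((Algebra.adjoin ℤ {x}).pow_mem (Algebra.subset_adjoin rfl) _) _


/-- An irreducible action `α_{λ̄,O}` of `ℤ^d` by multiplications by the
units `λ₁,…,λ_d` on a subring `O` with `ℤ[λ₁,…,λ_d] ⊆ O ⊆ O_K` is cyclic if and only
if `O = ℤ[λ₁,…,λ_d]`. -/
theorem stmt11 (n d : ℕ) (hn : 0 < n) (lam : Fin d → ℂ)
    (hintlam : ∀ i, IsIntegral ℤ (lam i))
    (O : Subalgebra ℤ ℂ)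
    (hintO : ∀ x ∈ O, IsIntegral ℤ x)
    (hRO : Algebra.adjoin ℤ (Set.range lam) ≤ O)
    (hunit : ∀ i, lam i ≠ 0 ∧ (lam i)⁻¹ ∈ O)
    (bO : Module.Basis (Fin n) ℤ O)
    (hinvO : ∀ (m : Fin d → ℤ), ∀ x ∈ O, (∏ i, lam i ^ m i) * x ∈ O)
    (hirr : ∃ m : Fin d → ℤ, (minpoly ℚ (∏ i, lam i ^ m i)).natDegree = n) :
    (∃ v ∈ O, Submodule.span ℤ
        {y : ℂ | ∃ m : Fin d → ℤ, y = (∏ i, lam i ^ m i) * v} =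
          Subalgebra.toSubmodule O) ↔
      Algebra.adjoin ℤ (Set.range lam) = O := by
  set A := Algebra.adjoin ℤ (Set.range lam) with hA
  -- each lam i ≠ 0 and (lam i)⁻¹ ∈ A
  have hne : ∀ i, lam i ≠ 0 := fun i => (hunit i).1
  have hinvA : ∀ i, (lam i)⁻¹ ∈ A := by
    intro i
    have hint : IsIntegral ℤ (lam i)⁻¹ := hintO _ (hunit i).2
    have : (lam i)⁻¹ ∈ Algebra.adjoin ℤ {lam i} := aux_inv_mem_adjoin (hne i) hint
    exact Algebra.adjoin_mono (Set.singleton_subset_iff.2 (Set.mem_range_self i)) this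
  have hlamA : ∀ i, lam i ∈ A := fun i => Algebra.subset_adjoin ⟨i, rfl⟩
  have hzpowA : ∀ i (z : ℤ), lam i ^ z ∈ A := by
    intro i z
    obtain ⟨a, rfl | rfl⟩ := Int.eq_nat_or_neg z
    · rw [zpow_natCast]; exact pow_mem (hlamA i) a
    · rw [_root_.zpow_neg, zpow_natCast, ← inv_pow]
      exact pow_mem (hinvA i) a
  have hprodA : ∀ m : Fin d → ℤ, (∏ i, lam i ^ m i) ∈ A :=
    fun m => prod_mem fun i _ => hzpowA i (m i)
  constructor
  · -- cyclic ⇒ O = A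
    rintro ⟨v, hv, hspan⟩
    -- every element of O has the form a * v with a ∈ A
    have hform : ∀ x ∈ O, ∃ a ∈ A, x = a * v := by
      intro x hx
      have hx' : x ∈ Submodule.span ℤ
          {y : ℂ | ∃ m : Fin d → ℤ, y = (∏ i, lam i ^ m i) * v} := by
        rw [hspan]; exact hx
      have hle : Submodule.span ℤ
          {y : ℂ | ∃ m : Fin d → ℤ, y = (∏ i, lam i ^ m i) * v} ≤
          Submodule.map (LinearMap.mulRight ℤ v) (Subalgebra.toSubmodule A) := by
        rw [Submodule.span_le]
        rintro y ⟨m, rfl⟩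
        exact ⟨∏ i, lam i ^ m i, hprodA m, rfl⟩
      obtain ⟨a, ha, rfl⟩ := hle hx'
      exact ⟨a, ha, rfl⟩
    have hv0 : v ≠ 0 := by
      rintro rfl
      obtain ⟨a, _, h1⟩ := hform 1 O.one_mem
      simp at h1
    have hvA : v ∈ A := by
      obtain ⟨b, hb, hb2⟩ := hform (v * v) (O.mul_mem hv hv)
      have : v = b := by
        exact mul_right_cancel₀ hv0 hb2
      rwa [this]
    refine le_antisymm hRO ?_
    intro x hx
    obtain ⟨a, ha, rfl⟩ := hform x hx
    exact A.mul_mem ha hvA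
  · -- O = A ⇒ cyclic (take v = 1)
    intro hAO
    refine ⟨1, O.one_mem, ?_⟩
    apply le_antisymm
    · rw [Submodule.span_le]
      rintro y ⟨m, rfl⟩
      have : (∏ i, lam i ^ m i) * 1 ∈ A := by rw [mul_one]; exact hprodA m
      exact hAO ▸ this
    · rw [← hAO, Algebra.adjoin_eq_span, Submodule.span_le]
      intro y hy
      refine Submodule.subset_span ?_
      induction hy using Submonoid.closure_induction with
      | mem z hz =>
        obtain ⟨i, rfl⟩ := hz
        refine ⟨Pi.single i 1, ?_⟩
        rw [mul_one]
        symm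
        rw [Finset.prod_eq_single i (fun j _ hj => by simp [Pi.single_eq_of_ne hj])
          (fun h => absurd (Finset.mem_univ i) h)]
        simp
      | one => exact ⟨0, by simp⟩
      | mul a b _ _ ha hb =>
        obtain ⟨ma, hma⟩ := ha
        obtain ⟨mb, hmb⟩ := hb
        refine ⟨ma + mb, ?_⟩
        rw [hma, hmb, mul_one, mul_one, mul_one, ← Finset.prod_mul_distrib]
        refine Finset.prod_congr rfl fun i _ => ?_
        rw [Pi.add_apply, zpow_add₀ (hne i)]
end

section
/- Let A ∈ GL(n,ℤ) have irreducible characteristic polynomial over ℚ with all eigenvalues real and distinct, and suppose the ring of integers of K = ℚ(λ) equals ℤ[λ]. Then the centralizer of the block-diagonal matrix diag(A,A) ∈ GL(2n,ℤ) in GL(2n,ℤ) is isomorphic to GL(2, O_K), the group of 2×2 matrices over O_K whose determinant is a unit in O_K. -/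
open Matrix Polynomial

theorem cent_eq_poly {n : ℕ} (hn : 0 < n) (B : Matrix (Fin n) (Fin n) ℚ)
    (hirr : Irreducible B.charpoly) (M : Matrix (Fin n) (Fin n) ℚ)
    (hM : M * B = B * M) : ∃ q : ℚ[X], M = aeval B q := by
  haveI : Nonempty (Fin n) := ⟨⟨0, hn⟩⟩
  haveI : Fact (Irreducible B.charpoly) := ⟨hirr⟩
  set p := B.charpoly with hp
  have hp0 : p ≠ 0 := hirr.ne_zero
  let K := AdjoinRoot p
  letI : CommRing (Algebra.adjoin ℚ ({B} : Set (Matrix (Fin n) (Fin n) ℚ))) :=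
    Algebra.adjoinCommRingOfComm ℚ (by rintro a rfl b rfl; rfl)
  have hroot : aeval (⟨B, Algebra.self_mem_adjoin_singleton ℚ B⟩ :
      Algebra.adjoin ℚ ({B} : Set (Matrix (Fin n) (Fin n) ℚ))) p = 0 := Subtype.ext (by
    rw [Polynomial.aeval_subalgebra_coe]
    simpa using Matrix.aeval_self_charpoly B)
  let φ' : K →ₐ[ℚ] Algebra.adjoin ℚ ({B} : Set (Matrix (Fin n) (Fin n) ℚ)) :=
    AdjoinRoot.liftAlgHom p (Algebra.ofId ℚ _) ⟨B, Algebra.self_mem_adjoin_singleton ℚ B⟩ hroot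
  let φ : K → Matrix (Fin n) (Fin n) ℚ := fun k => (φ' k : Matrix (Fin n) (Fin n) ℚ)
  have φ_mul : ∀ a b : K, φ (a * b) = φ a * φ b := by intro a b; simp [φ, _root_.map_mul]
  have φ_mk : ∀ q : ℚ[X], φ (AdjoinRoot.mk p q) = aeval B q := by
    intro q
    have h1 : φ' (AdjoinRoot.mk p q)
        = aeval (⟨B, Algebra.self_mem_adjoin_singleton ℚ B⟩ :
            Algebra.adjoin ℚ ({B} : Set (Matrix (Fin n) (Fin n) ℚ))) q :=
      AdjoinRoot.liftAlgHom_mk _ _ _ hroot q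
    have h2 := congrArg Subtype.val h1
    exact h2.trans (Polynomial.aeval_subalgebra_coe q _ _)
  -- every φ k commutes with anything commuting with B
  have hcomm : ∀ k : K, M * φ k = φ k * M := by
    intro k
    obtain ⟨q, rfl⟩ := AdjoinRoot.mk_surjective k
    rw [φ_mk]
    have : Commute M (aeval B q) := by
      refine Algebra.commute_of_mem_adjoin_singleton_of_commute (R := ℚ) ?_ hM
      rw [Algebra.adjoin_singleton_eq_range_aeval]
      exact ⟨q, rfl⟩
    exact this
  haveI : FiniteDimensional ℚ K := PowerBasis.finite (AdjoinRoot.powerBasis hp0)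
  let e : Fin n → ℚ := Pi.single ⟨0, hn⟩ 1
  have he : e ≠ 0 := by
    intro h
    have := congrFun h ⟨0, hn⟩
    simp [e, Pi.single_eq_same] at this
  let f : K →ₗ[ℚ] (Fin n → ℚ) :=
    { toFun := fun k => (φ k).mulVec e
      map_add' := by intro x y; simp [φ, _root_.map_add, Matrix.add_mulVec]
      map_smul' := by intro c x; simp [φ, _root_.map_smul, Matrix.smul_mulVec] }
  have hfinj : Function.Injective f := by
    rw [← LinearMap.ker_eq_bot, LinearMap.ker_eq_bot']
    intro k hk
    by_contra hk0
    have hu : IsUnit (φ k) := by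
      have : IsUnit (φ' k) := (IsUnit.mk0 k hk0).map φ'
      exact this.map (Algebra.adjoin ℚ _).val
    obtain ⟨u, hu⟩ := hu
    have h1 : (φ k) *ᵥ e = 0 := hk
    have h0 : e = 0 := by
      calc e = (1 : Matrix (Fin n) (Fin n) ℚ) *ᵥ e := (Matrix.one_mulVec e).symm
      _ = ((↑u⁻¹ * ↑u : Matrix (Fin n) (Fin n) ℚ)) *ᵥ e := by rw [Units.inv_mul]
      _ = (↑u⁻¹ : Matrix (Fin n) (Fin n) ℚ) *ᵥ ((↑u : Matrix (Fin n) (Fin n) ℚ) *ᵥ e) := by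
            rw [Matrix.mulVec_mulVec]
      _ = (↑u⁻¹ : Matrix (Fin n) (Fin n) ℚ) *ᵥ 0 := by rw [hu]; exact congrArg _ h1
      _ = 0 := Matrix.mulVec_zero _
    exact he h0
  have hrank : Module.finrank ℚ K = Module.finrank ℚ (Fin n → ℚ) := by
    rw [PowerBasis.finrank (AdjoinRoot.powerBasis hp0), Module.finrank_pi]
    simp only [AdjoinRoot.powerBasis]
    rw [hp, Matrix.charpoly_natDegree_eq_dim, Fintype.card_fin]
  have hfsurj : Function.Surjective f :=
    (LinearMap.injective_iff_surjective_of_finrank_eq_finrank hrank).mp hfinj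
  obtain ⟨k, hk⟩ : ∃ k : K, (φ k).mulVec e = M.mulVec e := hfsurj (M.mulVec e)
  have hall : ∀ x : Fin n → ℚ, M.mulVec x = (φ k).mulVec x := by
    intro x
    obtain ⟨c, hc⟩ : ∃ c : K, (φ c).mulVec e = x := hfsurj x
    calc M *ᵥ x = (M * φ c) *ᵥ e := by rw [← hc, Matrix.mulVec_mulVec]
    _ = (φ c * M) *ᵥ e := by rw [hcomm]
    _ = (φ c) *ᵥ (M *ᵥ e) := by rw [Matrix.mulVec_mulVec]
    _ = (φ c) *ᵥ ((φ k) *ᵥ e) := by rw [hk]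
    _ = (φ c * φ k) *ᵥ e := by rw [Matrix.mulVec_mulVec]
    _ = (φ (c * k)) *ᵥ e := by rw [φ_mul]
    _ = (φ (k * c)) *ᵥ e := by rw [mul_comm]
    _ = (φ k * φ c) *ᵥ e := by rw [φ_mul]
    _ = (φ k) *ᵥ x := by rw [← Matrix.mulVec_mulVec, hc]
  have hMk : M = φ k := by
    ext i j
    have := congrFun (hall (Pi.single j 1)) i
    simpa [Matrix.mulVec_single] using this
  obtain ⟨q, rfl⟩ := AdjoinRoot.mk_surjective k
  exact ⟨q, by rw [hMk, φ_mk]⟩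

theorem cent_ring_equiv (n : ℕ) (hn : 0 < n) (A : Matrix (Fin n) (Fin n) ℤ)
    (hirr : Irreducible (Matrix.charpoly (A.map (Int.cast : ℤ → ℚ))))
    (l : ℂ) (hl : (Matrix.charpoly (A.map (Int.cast : ℤ → ℂ))).IsRoot l)
    (hOK : ∀ x : ℂ, IsIntegral ℤ x →
      x ∈ IntermediateField.adjoin ℚ ({l} : Set ℂ) → x ∈ Algebra.adjoin ℤ ({l} : Set ℂ)) :
    Nonempty ((Subring.centralizer ({A} : Set (Matrix (Fin n) (Fin n) ℤ))) ≃+*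
      (Algebra.adjoin ℤ ({l} : Set ℂ))) := by
  haveI : Nonempty (Fin n) := ⟨⟨0, hn⟩⟩
  set Aq := A.map (Int.cast : ℤ → ℚ) with hAq
  set pq := Aq.charpoly with hpq
  set C := Subring.centralizer ({A} : Set (Matrix (Fin n) (Fin n) ℤ)) with hC
  set R := Algebra.adjoin ℤ ({l} : Set ℂ) with hR
  let ι : Matrix (Fin n) (Fin n) ℤ →+* Matrix (Fin n) (Fin n) ℚ :=
    (Int.castRingHom ℚ).mapMatrix
  have hι : ∀ B : Matrix (Fin n) (Fin n) ℤ, ι B = B.map (Int.cast : ℤ → ℚ) := fun _ => rfl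
  have hιinj : Function.Injective ι := by
    intro B B' h
    ext i j
    have h2 : ((B i j : ℤ) : ℚ) = ((B' i j : ℤ) : ℚ) := congrFun (congrFun h i) j
    exact_mod_cast h2
  -- pq is the minimal polynomial of l
  have hlroot : aeval l pq = 0 := by
    have hcomp : A.map (Int.cast : ℤ → ℂ) = Aq.map (algebraMap ℚ ℂ) := by
      rw [hAq, Matrix.map_map]
      ext i j
      simp
    have h1 : pq.map (algebraMap ℚ ℂ) = Matrix.charpoly (A.map (Int.cast : ℤ → ℂ)) := by
      rw [hpq, ← Matrix.charpoly_map, ← hcomp]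
    rw [aeval_def, eval₂_eq_eval_map, h1]
    exact hl
  have hminl : minpoly ℚ l = pq :=
    (minpoly.eq_of_irreducible_of_monic hirr hlroot (Matrix.charpoly_monic Aq)).symm
  -- pq divides any rational polynomial annihilating Aq
  have hAint : IsIntegral ℚ Aq := ⟨pq, Matrix.charpoly_monic Aq, Matrix.aeval_self_charpoly Aq⟩
  have hpdvd : ∀ r : ℚ[X], aeval Aq r = 0 → pq ∣ r := by
    have h1 : minpoly ℚ Aq ∣ pq := minpoly.dvd ℚ Aq (Matrix.aeval_self_charpoly Aq)
    obtain ⟨c, hc⟩ := h1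
    have hmu : ¬ IsUnit (minpoly ℚ Aq) := by
      intro hu
      have h4 : minpoly ℚ Aq = 1 := (minpoly.monic hAint).eq_one_of_isUnit hu
      have h5 := minpoly.aeval ℚ Aq
      rw [h4, _root_.map_one] at h5
      exact one_ne_zero h5
    have hcu : IsUnit c := (hirr.isUnit_or_isUnit hc).resolve_left hmu
    have hassoc : Associated (minpoly ℚ Aq) pq :=
      ⟨hcu.unit, by rw [IsUnit.unit_spec]; exact hc.symm⟩
    intro r hr
    exact hassoc.symm.dvd.trans (minpoly.dvd ℚ Aq hr)
  -- each element of the centralizer is a rational polynomial in Aq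
  have hex : ∀ B : C, ∃ q : ℚ[X], ι (B : Matrix (Fin n) (Fin n) ℤ) = aeval Aq q := by
    intro B
    have hBA : (B : Matrix (Fin n) (Fin n) ℤ) * A = A * (B : Matrix (Fin n) (Fin n) ℤ) :=
      ((Subring.mem_centralizer_iff.mp B.2) A rfl).symm
    have : ι B * Aq = Aq * ι B := by
      rw [hAq, ← hι, ← _root_.map_mul, ← _root_.map_mul, hBA]
    exact cent_eq_poly hn Aq hirr (ι B) this
  choose pol hpol using hex
  let χ : C → ℂ := fun B => aeval l (pol B)
  have hwd : ∀ (B : C) (q : ℚ[X]), ι (B : Matrix (Fin n) (Fin n) ℤ) = aeval Aq q →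
      χ B = aeval l q := by
    intro B q h
    have h0 : aeval Aq (pol B - q) = 0 := by
      rw [map_sub, ← hpol B, h, sub_self]
    obtain ⟨c, hc⟩ := hpdvd _ h0
    have : aeval l (pol B - q) = 0 := by rw [hc, _root_.map_mul, hlroot, zero_mul]
    rw [map_sub, sub_eq_zero] at this
    exact this
  -- χ is a ring homomorphism
  have hone : χ 1 = 1 := by
    rw [hwd 1 1 (by simp), _root_.map_one]
  have hmul : ∀ B B' : C, χ (B * B') = χ B * χ B' := by
    intro B B'
    have : ι ((B * B' : C) : Matrix (Fin n) (Fin n) ℤ) = aeval Aq (pol B * pol B') :=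
      calc ι ((B * B' : C) : Matrix (Fin n) (Fin n) ℤ)
          = ι ((B : Matrix (Fin n) (Fin n) ℤ) * (B' : Matrix (Fin n) (Fin n) ℤ)) := rfl
        _ = ι (B : Matrix (Fin n) (Fin n) ℤ) * ι (B' : Matrix (Fin n) (Fin n) ℤ) :=
            _root_.map_mul ι _ _
        _ = aeval Aq (pol B) * aeval Aq (pol B') := by rw [hpol B, hpol B']
        _ = aeval Aq (pol B * pol B') := (_root_.map_mul (aeval Aq) _ _).symm
    rw [hwd _ _ this, _root_.map_mul]
  have hzero : χ 0 = 0 := by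
    rw [hwd 0 0 (by simp), map_zero]
  have hadd : ∀ B B' : C, χ (B + B') = χ B + χ B' := by
    intro B B'
    have : ι ((B + B' : C) : Matrix (Fin n) (Fin n) ℤ) = aeval Aq (pol B + pol B') :=
      calc ι ((B + B' : C) : Matrix (Fin n) (Fin n) ℤ)
          = ι ((B : Matrix (Fin n) (Fin n) ℤ) + (B' : Matrix (Fin n) (Fin n) ℤ)) := rfl
        _ = ι (B : Matrix (Fin n) (Fin n) ℤ) + ι (B' : Matrix (Fin n) (Fin n) ℤ) :=
            _root_.map_add ι _ _
        _ = aeval Aq (pol B) + aeval Aq (pol B') := by rw [hpol B, hpol B']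
        _ = aeval Aq (pol B + pol B') := (_root_.map_add (aeval Aq) _ _).symm
    rw [hwd _ _ this, _root_.map_add]
  let χh : C →+* ℂ :=
    { toFun := χ, map_one' := hone, map_mul' := hmul, map_zero' := hzero, map_add' := hadd }
  -- χ is injective
  have hinj : Function.Injective χh := by
    rw [injective_iff_map_eq_zero]
    intro B hB
    have h1 : aeval l (pol B) = 0 := hB
    have h2 : pq ∣ pol B := by
      rw [← hminl]; exact minpoly.dvd ℚ l h1
    obtain ⟨c, hc⟩ := h2
    have h3 : ι (B : Matrix (Fin n) (Fin n) ℤ) = 0 := by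
      rw [hpol B, hc, _root_.map_mul, Matrix.aeval_self_charpoly, zero_mul]
    have h4 : (B : Matrix (Fin n) (Fin n) ℤ) = 0 := hιinj (by rw [h3, map_zero])
    exact Subtype.ext h4
  -- χ maps into R
  have hint : ∀ B : C, (χh B) ∈ R := by
    intro B
    apply hOK
    · -- integrality
      have h1 : IsIntegral ℤ (B : Matrix (Fin n) (Fin n) ℤ) :=
        ⟨Matrix.charpoly (B : Matrix (Fin n) (Fin n) ℤ), Matrix.charpoly_monic _,
          Matrix.aeval_self_charpoly _⟩
      obtain ⟨r, hrm, hr0⟩ := h1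
      have h2 : IsIntegral ℤ B := by
        refine ⟨r, hrm, Subtype.ext ?_⟩
        have h3 := Polynomial.aeval_algHom_apply (C.subtype.toIntAlgHom) B r
        calc ((aeval B r : C) : Matrix (Fin n) (Fin n) ℤ)
            = aeval ((B : C) : Matrix (Fin n) (Fin n) ℤ) r := h3.symm
          _ = 0 := hr0
          _ = ((0 : C) : Matrix (Fin n) (Fin n) ℤ) := by simp
      exact h2.map χh.toIntAlgHom
    · -- membership in ℚ(l)
      have h1 : χh B ∈ Algebra.adjoin ℚ ({l} : Set ℂ) := by
        rw [Algebra.adjoin_singleton_eq_range_aeval]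
        exact ⟨pol B, rfl⟩
      exact IntermediateField.algebra_adjoin_le_adjoin ℚ ({l} : Set ℂ) h1
  -- χ hits l
  have hAmem : A ∈ C := Subring.mem_centralizer_iff.mpr (by rintro g rfl; rfl)
  have hχA : χh ⟨A, hAmem⟩ = l := by
    have h1 : ι ((⟨A, hAmem⟩ : C) : Matrix (Fin n) (Fin n) ℤ) = aeval Aq (X : ℚ[X]) := by
      rw [aeval_X, hAq]
      exact hι A
    have := hwd ⟨A, hAmem⟩ (X : ℚ[X]) h1
    rwa [aeval_X] at this
  -- χ surjects onto R
  have hsurj : ∀ x ∈ R, ∃ B : C, χh B = x := by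
    have hle : R ≤ χh.toIntAlgHom.range := by
      rw [hR]
      apply Algebra.adjoin_le
      rintro x rfl
      exact ⟨⟨A, hAmem⟩, hχA⟩
    intro x hx
    obtain ⟨B, hB⟩ := hle hx
    exact ⟨B, hB⟩
  let f : C →+* R := χh.codRestrict R.toSubring hint
  refine ⟨RingEquiv.ofBijective f ⟨?_, ?_⟩⟩
  · intro a b h
    exact hinj (congrArg Subtype.val h)
  · rintro ⟨x, hx⟩
    obtain ⟨B, hB⟩ := hsurj x hx
    exact ⟨B, Subtype.ext hB⟩

/-- Let `A ∈ GL(n,ℤ)` have irreducible characteristic polynomial with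
all eigenvalues real and distinct, and suppose the ring of integers of `K = ℚ(λ)` is
`ℤ[λ]`.  Then the centralizer of `diag(A,A) ∈ GL(2n,ℤ)` in `GL(2n,ℤ)` is isomorphic
to `GL(2, O_K)` where `O_K = ℤ[λ]`. -/
theorem stmt15 (n : ℕ) (hn : 0 < n) (A : Matrix (Fin n) (Fin n) ℤ)
    (hA : IsUnit A.det)
    (hirr : Irreducible (Matrix.charpoly (A.map (Int.cast : ℤ → ℚ))))
    (l : ℂ) (hl : (Matrix.charpoly (A.map (Int.cast : ℤ → ℂ))).IsRoot l)
    (hreal : ∀ z ∈ (Matrix.charpoly (A.map (Int.cast : ℤ → ℂ))).roots, z.im = 0)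
    (hdistinct : (Matrix.charpoly (A.map (Int.cast : ℤ → ℂ))).roots.Nodup)
    (hOK : ∀ x : ℂ, IsIntegral ℤ x →
      x ∈ IntermediateField.adjoin ℚ ({l} : Set ℂ) → x ∈ Algebra.adjoin ℤ ({l} : Set ℂ))
    (D : GL (Fin n ⊕ Fin n) ℤ)
    (hD : (D : Matrix (Fin n ⊕ Fin n) (Fin n ⊕ Fin n) ℤ) =
      Matrix.fromBlocks A 0 0 A) :
    Nonempty ((Subgroup.centralizer ({D} : Set (GL (Fin n ⊕ Fin n) ℤ))) ≃*
      GL (Fin 2) (Algebra.adjoin ℤ ({l} : Set ℂ))) := by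
  obtain ⟨ε⟩ := cent_ring_equiv n hn A hirr l hl hOK
  set C := Subring.centralizer ({A} : Set (Matrix (Fin n) (Fin n) ℤ)) with hCdef
  set Dm : Matrix (Fin n ⊕ Fin n) (Fin n ⊕ Fin n) ℤ := Matrix.fromBlocks A 0 0 A with hDm
  set C₂ := Subring.centralizer ({Dm} : Set (Matrix (Fin n ⊕ Fin n) (Fin n ⊕ Fin n) ℤ))
    with hC₂def
  have hC₂ : ∀ m, m ∈ C₂ ↔ Dm * m = m * Dm := by
    intro m
    rw [hC₂def, Subring.mem_centralizer_iff]
    constructor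
    · intro h; exact h Dm rfl
    · rintro h g rfl; exact h
  have hCm : ∀ m, m ∈ C ↔ A * m = m * A := by
    intro m
    rw [hCdef, Subring.mem_centralizer_iff]
    constructor
    · intro h; exact h A rfl
    · rintro h g rfl; exact h
  -- block characterization of C₂
  have hmul1 : ∀ B : Matrix (Fin n ⊕ Fin n) (Fin n ⊕ Fin n) ℤ,
      Dm * B = Matrix.fromBlocks (A * B.toBlocks₁₁) (A * B.toBlocks₁₂)
        (A * B.toBlocks₂₁) (A * B.toBlocks₂₂) := by
    intro B
    conv_lhs => rw [← Matrix.fromBlocks_toBlocks B, hDm, Matrix.fromBlocks_multiply]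
    simp
  have hmul2 : ∀ B : Matrix (Fin n ⊕ Fin n) (Fin n ⊕ Fin n) ℤ,
      B * Dm = Matrix.fromBlocks (B.toBlocks₁₁ * A) (B.toBlocks₁₂ * A)
        (B.toBlocks₂₁ * A) (B.toBlocks₂₂ * A) := by
    intro B
    conv_lhs => rw [← Matrix.fromBlocks_toBlocks B, hDm, Matrix.fromBlocks_multiply]
    simp
  have hmem : ∀ B : Matrix (Fin n ⊕ Fin n) (Fin n ⊕ Fin n) ℤ, B ∈ C₂ ↔
      (B.toBlocks₁₁ ∈ C ∧ B.toBlocks₁₂ ∈ C ∧ B.toBlocks₂₁ ∈ C ∧ B.toBlocks₂₂ ∈ C) := by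
    intro B
    rw [hC₂ B, hmul1 B, hmul2 B, Matrix.fromBlocks_inj, hCm, hCm, hCm, hCm]
  -- the ring equivalence C₂ ≃+* Matrix (Fin 2) (Fin 2) C, via fromBlocks
  let g : Matrix (Fin 2) (Fin 2) C → C₂ := fun P =>
    ⟨Matrix.fromBlocks (P 0 0) (P 0 1) (P 1 0) (P 1 1), (hmem _).mpr (by
      rw [Matrix.toBlocks_fromBlocks₁₁, Matrix.toBlocks_fromBlocks₁₂,
        Matrix.toBlocks_fromBlocks₂₁, Matrix.toBlocks_fromBlocks₂₂]
      exact ⟨(P 0 0).2, (P 0 1).2, (P 1 0).2, (P 1 1).2⟩)⟩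
  have hgval : ∀ P, (g P : Matrix (Fin n ⊕ Fin n) (Fin n ⊕ Fin n) ℤ) =
      Matrix.fromBlocks (P 0 0) (P 0 1) (P 1 0) (P 1 1) := fun _ => rfl
  have hg1 : g 1 = 1 := by
    apply Subtype.ext
    rw [hgval]
    have e1 : ((1 : Matrix (Fin 2) (Fin 2) C) 0 0) = 1 := Matrix.one_apply_eq _
    have e2 : ((1 : Matrix (Fin 2) (Fin 2) C) 0 1) = 0 := Matrix.one_apply_ne (by decide)
    have e3 : ((1 : Matrix (Fin 2) (Fin 2) C) 1 0) = 0 := Matrix.one_apply_ne (by decide)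
    have e4 : ((1 : Matrix (Fin 2) (Fin 2) C) 1 1) = 1 := Matrix.one_apply_eq _
    rw [e1, e2, e3, e4]
    simp only [OneMemClass.coe_one, ZeroMemClass.coe_zero]
    exact Matrix.fromBlocks_one
  have hentry : ∀ (P Q : Matrix (Fin 2) (Fin 2) C) (i j : Fin 2),
      (((P * Q) i j : C) : Matrix (Fin n) (Fin n) ℤ) =
        (P i 0 : C) * (Q 0 j : C) + (P i 1 : C) * (Q 1 j : C) := by
    intro P Q i j
    rw [Matrix.mul_apply, Fin.sum_univ_two]
    push_cast
    rfl
  have hgmul : ∀ P Q, g (P * Q) = g P * g Q := by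
    intro P Q
    apply Subtype.ext
    rw [MulMemClass.coe_mul, hgval, hgval, hgval, Matrix.fromBlocks_multiply]
    rw [hentry P Q 0 0, hentry P Q 0 1, hentry P Q 1 0, hentry P Q 1 1]
  have hgadd : ∀ P Q, g (P + Q) = g P + g Q := by
    intro P Q
    apply Subtype.ext
    rw [AddMemClass.coe_add, hgval, hgval, hgval, Matrix.fromBlocks_add]
    simp [Matrix.add_apply]
  have hginj : Function.Injective g := by
    intro P Q h
    have h2 := congrArg (Subtype.val) h
    rw [hgval, hgval] at h2
    obtain ⟨e1, e2, e3, e4⟩ := Matrix.fromBlocks_inj.mp h2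
    ext i j
    fin_cases i <;> fin_cases j
    · exact congrFun (congrFun e1 _) _
    · exact congrFun (congrFun e2 _) _
    · exact congrFun (congrFun e3 _) _
    · exact congrFun (congrFun e4 _) _
  have hgsurj : Function.Surjective g := by
    intro B
    obtain ⟨h1, h2, h3, h4⟩ := (hmem _).mp B.2
    refine ⟨Matrix.of ![![⟨_, h1⟩, ⟨_, h2⟩], ![⟨_, h3⟩, ⟨_, h4⟩]], ?_⟩
    apply Subtype.ext
    rw [hgval]
    simp only [Matrix.of_apply, Matrix.cons_val', Matrix.cons_val_zero, Matrix.cons_val_one,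
      Matrix.head_cons, Matrix.empty_val', Matrix.cons_val_fin_one, Matrix.head_fin_const]
    exact Matrix.fromBlocks_toBlocks _
  let Ψ : Matrix (Fin 2) (Fin 2) C →+* C₂ :=
    { toFun := g, map_one' := hg1, map_mul' := hgmul,
      map_zero' := by
        apply Subtype.ext
        rw [hgval]
        show Matrix.fromBlocks (((0 : Matrix (Fin 2) (Fin 2) C) 0 0 : C) : Matrix (Fin n) (Fin n) ℤ)
          (((0 : Matrix (Fin 2) (Fin 2) C) 0 1 : C) : Matrix (Fin n) (Fin n) ℤ)
          (((0 : Matrix (Fin 2) (Fin 2) C) 1 0 : C) : Matrix (Fin n) (Fin n) ℤ)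
          (((0 : Matrix (Fin 2) (Fin 2) C) 1 1 : C) : Matrix (Fin n) (Fin n) ℤ) = 0
        simp
      map_add' := hgadd }
  let Θ : C₂ ≃+* Matrix (Fin 2) (Fin 2) C := (RingEquiv.ofBijective Ψ ⟨hginj, hgsurj⟩).symm
  -- the group equivalence with the centralizer subgroup
  let Φ : (Subgroup.centralizer ({D} : Set (GL (Fin n ⊕ Fin n) ℤ))) ≃* C₂ˣ :=
    { toFun := fun U =>
        { val := ⟨((U : GL (Fin n ⊕ Fin n) ℤ) : Matrix _ _ ℤ), (hC₂ _).mpr (by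
            have h := Subgroup.mem_centralizer_iff.mp U.2 D rfl
            have h2 := congrArg Units.val h
            rw [Units.val_mul, Units.val_mul, hD] at h2
            exact h2)⟩
          inv := ⟨(((U : GL (Fin n ⊕ Fin n) ℤ)⁻¹ : GL (Fin n ⊕ Fin n) ℤ) : Matrix _ _ ℤ),
            (hC₂ _).mpr (by
            have h : Commute D (U : GL (Fin n ⊕ Fin n) ℤ) :=
              Subgroup.mem_centralizer_iff.mp U.2 D rfl
            have h2 := congrArg Units.val h.inv_right
            rw [Units.val_mul, Units.val_mul, hD] at h2
            exact h2)⟩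
          val_inv := Subtype.ext (Units.mul_inv _)
          inv_val := Subtype.ext (Units.inv_mul _) }
      invFun := fun u =>
        ⟨{ val := (u.val : Matrix (Fin n ⊕ Fin n) (Fin n ⊕ Fin n) ℤ)
           inv := (u.inv : Matrix (Fin n ⊕ Fin n) (Fin n ⊕ Fin n) ℤ)
           val_inv := congrArg Subtype.val u.val_inv
           inv_val := congrArg Subtype.val u.inv_val },
         Subgroup.mem_centralizer_iff.mpr (by
           rintro g rfl
           apply Units.ext
           rw [Units.val_mul, Units.val_mul, hD]
           exact (hC₂ _).mp u.val.2)⟩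
      left_inv := fun U => by
        apply Subtype.ext
        apply Units.ext
        rfl
      right_inv := fun u => by
        apply Units.ext
        apply Subtype.ext
        rfl
      map_mul' := fun U V => by
        apply Units.ext
        apply Subtype.ext
        rfl }
  exact ⟨Φ.trans ((Units.mapEquiv Θ.toMulEquiv).trans (Units.mapEquiv ε.mapMatrix.toMulEquiv))⟩
end

section
/- There is no integer vector m = (m₁,m₂,m₃) ∈ ℤ³ such that 3m₁³ + 18m₁²m₃ − 9m₁m₂² − 9m₁m₂m₃ + 27m₁m₃² + 3m₂³ − 9m₂m₃² + 3m₃³ = 1; consequently the matrix A′ = [[1,2,−1],[−1,−2,2],[2,5,−2]] ∈ SL(3,ℤ) has no cyclic vector in ℤ³ (no m such that m, mA′, m(A′)² form a ℤ-basis of ℤ³). -/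
/-! The determinant of the matrix with rows `m, mA', m(A')²` is a cubic form in `m` all of whose
coefficients are divisible by `3`, so it is never a unit of `ℤ`. -/

open Matrix

def krylovMatrix {R : Type*} [CommRing R] (A : Matrix (Fin 3) (Fin 3) R) (m : Fin 3 → R) :
    Matrix (Fin 3) (Fin 3) R :=
  of ![m, m ᵥ* A, (m ᵥ* A) ᵥ* A]

def cubicForm (m₁ m₂ m₃ : ℤ) : ℤ :=
  3 * m₁ ^ 3 + 18 * m₁ ^ 2 * m₃ - 9 * m₁ * m₂ ^ 2 - 9 * m₁ * m₂ * m₃ +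
    27 * m₁ * m₃ ^ 2 + 3 * m₂ ^ 3 - 9 * m₂ * m₃ ^ 2 + 3 * m₃ ^ 3

lemma three_dvd_cubicForm (m₁ m₂ m₃ : ℤ) : 3 ∣ cubicForm m₁ m₂ m₃ :=
  ⟨m₁ ^ 3 + 6 * m₁ ^ 2 * m₃ - 3 * m₁ * m₂ ^ 2 - 3 * m₁ * m₂ * m₃ + 9 * m₁ * m₃ ^ 2 + m₂ ^ 3
      - 3 * m₂ * m₃ ^ 2 + m₃ ^ 3, by unfold cubicForm; ring⟩

lemma not_isUnit_cubicForm (m₁ m₂ m₃ : ℤ) : ¬ IsUnit (cubicForm m₁ m₂ m₃) := fun hu =>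
  Int.prime_three.not_isUnit (isUnit_of_dvd_unit (three_dvd_cubicForm m₁ m₂ m₃) hu)

lemma det_krylovMatrix_eq_cubicForm (m : Fin 3 → ℤ) :
    (krylovMatrix !![(1 : ℤ), 2, -1; -1, -2, 2; 2, 5, -2] m).det =
      cubicForm (m 0) (m 1) (m 2) := by
  simp only [krylovMatrix, cubicForm, det_fin_three, vecMul, dotProduct, Fin.sum_univ_three,
    of_apply, cons_val', cons_val_zero, cons_val_one, head_cons, cons_val_fin_one, empty_val',
    head_fin_const, cons_val_two, tail_cons]
  ring

/-- The cubic form `3m₁³ + 18m₁²m₃ − 9m₁m₂² − 9m₁m₂m₃ + 27m₁m₃² + 3m₂³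
− 9m₂m₃² + 3m₃³` never takes the value `1` on integer vectors; consequently the
matrix `A' = [[1,2,−1],[−1,−2,2],[2,5,−2]]` has no cyclic vector in `ℤ³`: there is no
`m ∈ ℤ³` such that `m, mA', m(A')²` form a `ℤ`-basis of `ℤ³` (i.e. the matrix with
these rows has determinant `±1`). -/
theorem stmt19 :
    (¬ ∃ m₁ m₂ m₃ : ℤ,
      3 * m₁ ^ 3 + 18 * m₁ ^ 2 * m₃ - 9 * m₁ * m₂ ^ 2 - 9 * m₁ * m₂ * m₃ +
        27 * m₁ * m₃ ^ 2 + 3 * m₂ ^ 3 - 9 * m₂ * m₃ ^ 2 + 3 * m₃ ^ 3 = 1) ∧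
    (∀ m : Fin 3 → ℤ,
      ¬ IsUnit (Matrix.of
        ![m, Matrix.vecMul m !![(1 : ℤ), 2, -1; -1, -2, 2; 2, 5, -2],
          Matrix.vecMul (Matrix.vecMul m !![(1 : ℤ), 2, -1; -1, -2, 2; 2, 5, -2])
            !![(1 : ℤ), 2, -1; -1, -2, 2; 2, 5, -2]]).det) := by
  refine ⟨fun ⟨m₁, m₂, m₃, h⟩ => not_isUnit_cubicForm m₁ m₂ m₃ ?_, fun m => ?_⟩
  · exact (show cubicForm m₁ m₂ m₃ = 1 from h) ▸ isUnit_one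
  · rw [← krylovMatrix, det_krylovMatrix_eq_cubicForm]
    exact not_isUnit_cubicForm _ _ _
end
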